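/- arXiv:2601.03428 — 5 statements merged into one kernel-verified Lean document; each statement's English description precedes it below -/
import Mathlib

section
/- Let α ∈ [0,1] and r ∈ [0,1], and let μ0 and μ1 be Borel probability measures on the real interval [0,1]. Then sup_{p ∈ [0,1]} q_{α,r}(p·μ1 + (1−p)·μ0) = max{q_{α,r}(μ0), q_{α,r}(μ1)}, and the supremum is attained at p = 0 or at p = 1. -/
open MeasureTheory Set

noncomputable section

/-- The set of `α`-quantiles of a Borel probability measure on `[0,1]`
(represented as a measure on `ℝ` giving mass 1 to `[0,1]`). -/
def quantSet (α : ℝ) (μ : Measure ℝ) : Set ℝ :=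
  {q | q ∈ Icc (0 : ℝ) 1 ∧ α ≤ (μ (Icc 0 q)).toReal ∧ 1 - α ≤ (μ (Icc q 1)).toReal}

/-- The `(α, r)`-quantile of `μ`: `r · sup Q(α,μ) + (1 - r) · inf Q(α,μ)`. -/
def quant (α r : ℝ) (μ : Measure ℝ) : ℝ :=
  r * sSup (quantSet α μ) + (1 - r) * sInf (quantSet α μ)

/-- `μ` is a Borel probability measure concentrated on `[0,1]`. -/
def IsProb01 (μ : Measure ℝ) : Prop :=
  IsProbabilityMeasure μ ∧ μ (Icc (0 : ℝ) 1) = 1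

/-- The mixture `p · μ1 + (1 - p) · μ0`. -/
def mix (p : ℝ) (μ0 μ1 : Measure ℝ) : Measure ℝ :=
  ENNReal.ofReal p • μ1 + ENNReal.ofReal (1 - p) • μ0

/-- The "Bernoulli" measure on `[0,1]`: mass `a` at `0` and mass `1 - a` at `1`. -/
def Ber (a : ℝ) : Measure ℝ :=
  ENNReal.ofReal a • Measure.dirac (0 : ℝ) + ENNReal.ofReal (1 - a) • Measure.dirac (1 : ℝ)

namespace QAux

/-- monotonicity of toReal measures -/
lemma toReal_mono' (μ : Measure ℝ) [IsFiniteMeasure μ] {s t : Set ℝ} (h : s ⊆ t) :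
    (μ s).toReal ≤ (μ t).toReal :=
  ENNReal.toReal_mono (measure_ne_top μ t) (measure_mono h)

/-- Right continuity of the CDF, as an inequality. -/
lemma le_F_of_forall_gt (μ : Measure ℝ) [IsFiniteMeasure μ] {q c : ℝ}
    (h : ∀ x, q < x → c ≤ (μ (Icc 0 x)).toReal) : c ≤ (μ (Icc 0 q)).toReal := by
  have hset : Icc (0:ℝ) q = ⋂ n : ℕ, Icc 0 (q + 1/(n+1)) := by
    ext y
    simp only [mem_iInter, mem_Icc]
    constructor
    · rintro ⟨h1, h2⟩ n
      have : (0:ℝ) < 1/(n+1) := by positivity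
      exact ⟨h1, by linarith⟩
    · intro h
      refine ⟨(h 0).1, ?_⟩
      refine le_of_forall_pos_le_add fun ε hε => ?_
      obtain ⟨n, hn⟩ := exists_nat_one_div_lt hε
      exact ((h n).2).trans (by linarith [hn])
  have hanti : Antitone fun n : ℕ => Icc (0:ℝ) (q + 1/(n+1)) := by
    intro m n hmn
    apply Icc_subset_Icc le_rfl
    have hmn' : (m:ℝ) ≤ n := Nat.cast_le.2 hmn
    have : (1:ℝ)/(n+1) ≤ 1/(m+1) :=
      one_div_le_one_div_of_le (by positivity) (by linarith)
    linarith
  have hmeas : μ (Icc (0:ℝ) q) = ⨅ n : ℕ, μ (Icc 0 (q + 1/(n+1))) := by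
    rw [hset]
    exact hanti.measure_iInter (fun n => (measurableSet_Icc).nullMeasurableSet)
      ⟨0, measure_ne_top _ _⟩
  rw [← ENNReal.ofReal_le_iff_le_toReal (measure_ne_top _ _), hmeas, le_iInf_iff]
  intro n
  rw [ENNReal.ofReal_le_iff_le_toReal (measure_ne_top _ _)]
  have : (0:ℝ) < 1/(n+1) := by positivity
  exact h _ (by linarith)

/-- Left continuity of the survival function, as an inequality. -/
lemma le_G_of_forall_lt (μ : Measure ℝ) [IsFiniteMeasure μ] {q c : ℝ}
    (h : ∀ x, x < q → c ≤ (μ (Icc x 1)).toReal) : c ≤ (μ (Icc q 1)).toReal := by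
  have hset : Icc q (1:ℝ) = ⋂ n : ℕ, Icc (q - 1/(n+1)) 1 := by
    ext y
    simp only [mem_iInter, mem_Icc]
    constructor
    · rintro ⟨h1, h2⟩ n
      have : (0:ℝ) < 1/(n+1) := by positivity
      exact ⟨by linarith, h2⟩
    · intro h
      refine ⟨?_, (h 0).2⟩
      have : ∀ ε : ℝ, 0 < ε → q ≤ y + ε := by
        intro ε hε
        obtain ⟨n, hn⟩ := exists_nat_one_div_lt hε
        linarith [(h n).1]
      exact le_of_forall_pos_le_add this
  have hanti : Antitone fun n : ℕ => Icc (q - 1/(n+1)) (1:ℝ) := by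
    intro m n hmn
    apply Icc_subset_Icc _ le_rfl
    have hmn' : (m:ℝ) ≤ n := Nat.cast_le.2 hmn
    have : (1:ℝ)/(n+1) ≤ 1/(m+1) :=
      one_div_le_one_div_of_le (by positivity) (by linarith)
    linarith
  have hmeas : μ (Icc q (1:ℝ)) = ⨅ n : ℕ, μ (Icc (q - 1/(n+1)) 1) := by
    rw [hset]
    exact hanti.measure_iInter (fun n => (measurableSet_Icc).nullMeasurableSet)
      ⟨0, measure_ne_top _ _⟩
  rw [← ENNReal.ofReal_le_iff_le_toReal (measure_ne_top _ _), hmeas, le_iInf_iff]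
  intro n
  rw [ENNReal.ofReal_le_iff_le_toReal (measure_ne_top _ _)]
  have : (0:ℝ) < 1/(n+1) := by positivity
  exact h _ (by linarith)

lemma one_le_FG (μ : Measure ℝ) (hμ : IsProb01 μ) (x : ℝ) :
    1 ≤ (μ (Icc 0 x)).toReal + (μ (Icc x 1)).toReal := by
  haveI := hμ.1
  have hsub : Icc (0:ℝ) 1 ⊆ Icc 0 x ∪ Icc x 1 := by
    intro y hy
    rcases le_total y x with h | h
    · exact Or.inl ⟨hy.1, h⟩
    · exact Or.inr ⟨h, hy.2⟩
  have h1 : μ (Icc (0:ℝ) 1) ≤ μ (Icc 0 x) + μ (Icc x 1) :=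
    (measure_mono hsub).trans (measure_union_le _ _)
  have h2 : (μ (Icc (0:ℝ) 1)).toReal ≤ (μ (Icc 0 x) + μ (Icc x 1)).toReal :=
    ENNReal.toReal_mono (by exact ENNReal.add_ne_top.2 ⟨measure_ne_top _ _, measure_ne_top _ _⟩) h1
  rw [ENNReal.toReal_add (measure_ne_top _ _) (measure_ne_top _ _)] at h2
  rw [hμ.2] at h2
  simpa using h2

lemma FG_le_one (μ : Measure ℝ) (hμ : IsProb01 μ) {x q : ℝ} (h : x < q) :
    (μ (Icc 0 x)).toReal + (μ (Icc q 1)).toReal ≤ 1 := by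
  haveI := hμ.1
  have hdisj : Disjoint (Icc (0:ℝ) x) (Icc q 1) := by
    apply Set.disjoint_left.2
    rintro y ⟨_, hy2⟩ ⟨hy3, _⟩
    linarith
  have h1 : μ (Icc 0 x) + μ (Icc q 1) = μ (Icc 0 x ∪ Icc q 1) :=
    (measure_union hdisj measurableSet_Icc).symm
  have h2 : μ (Icc (0:ℝ) 0 ∪ Icc q 1) ≤ 1 := by exact le_trans (measure_mono (subset_univ _)) (by simp)
  have h3 : μ (Icc (0:ℝ) x ∪ Icc q 1) ≤ 1 :=
    le_trans (measure_mono (subset_univ _)) (by simp)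
  have := ENNReal.toReal_mono (by simp) (h1 ▸ h3 : μ (Icc 0 x) + μ (Icc q 1) ≤ 1)
  rw [ENNReal.toReal_add (measure_ne_top _ _) (measure_ne_top _ _)] at this
  simpa using this

lemma quantSet_subset (α : ℝ) (μ : Measure ℝ) : quantSet α μ ⊆ Icc 0 1 := fun _ hq => hq.1

lemma quantSet_bddAbove (α : ℝ) (μ : Measure ℝ) : BddAbove (quantSet α μ) :=
  (bddAbove_Icc).mono (quantSet_subset α μ)

lemma quantSet_bddBelow (α : ℝ) (μ : Measure ℝ) : BddBelow (quantSet α μ) :=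
  (bddBelow_Icc).mono (quantSet_subset α μ)

lemma quantSet_nonempty {α : ℝ} (hα : α ∈ Icc (0:ℝ) 1) {μ : Measure ℝ} (hμ : IsProb01 μ) :
    (quantSet α μ).Nonempty := by
  haveI := hμ.1
  set A : Set ℝ := {q | q ∈ Icc (0:ℝ) 1 ∧ α ≤ (μ (Icc 0 q)).toReal} with hA
  have h1A : (1:ℝ) ∈ A := by
    refine ⟨⟨zero_le_one, le_rfl⟩, ?_⟩
    rw [hμ.2]; simpa using hα.2
  have hbdd : BddBelow A := ⟨0, fun x hx => hx.1.1⟩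
  set q := sInf A with hq
  have hq0 : 0 ≤ q := le_csInf ⟨1, h1A⟩ (fun x hx => hx.1.1)
  have hq1 : q ≤ 1 := csInf_le hbdd h1A
  refine ⟨q, ⟨hq0, hq1⟩, ?_, ?_⟩
  · apply le_F_of_forall_gt μ
    intro x hx
    obtain ⟨y, hyA, hyx⟩ := (csInf_lt_iff hbdd ⟨1, h1A⟩).1 hx
    exact hyA.2.trans (toReal_mono' μ (Icc_subset_Icc le_rfl hyx.le))
  · apply le_G_of_forall_lt μ
    intro x hxq
    rcases lt_or_ge x 0 with hx0 | hx0
    · have : (μ (Icc 0 1)).toReal ≤ (μ (Icc x 1)).toReal :=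
        toReal_mono' μ (Icc_subset_Icc hx0.le le_rfl)
      rw [hμ.2] at this
      simp only [ENNReal.toReal_one] at this
      linarith [hα.1]
    · have hxA : x ∉ A := fun hxA => absurd (csInf_le hbdd hxA) (not_le.2 hxq)
      have hFx : (μ (Icc 0 x)).toReal < α := by
        by_contra hc
        exact hxA ⟨⟨hx0, by linarith⟩, not_lt.1 hc⟩
      linarith [one_le_FG μ hμ x]

lemma csSup_mem_quantSet {α : ℝ} (hα : α ∈ Icc (0:ℝ) 1) {μ : Measure ℝ} (hμ : IsProb01 μ) :
    sSup (quantSet α μ) ∈ quantSet α μ := by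
  haveI := hμ.1
  obtain ⟨q0, hq0⟩ := quantSet_nonempty hα hμ
  have hbdd := quantSet_bddAbove α μ
  have hle : q0 ≤ sSup (quantSet α μ) := le_csSup hbdd hq0
  have hs1 : sSup (quantSet α μ) ≤ 1 := csSup_le ⟨q0, hq0⟩ (fun x hx => hx.1.2)
  refine ⟨⟨hq0.1.1.trans hle, hs1⟩, ?_, ?_⟩
  · exact hq0.2.1.trans (toReal_mono' μ (Icc_subset_Icc le_rfl hle))
  · apply le_G_of_forall_lt μ
    intro x hx
    obtain ⟨y, hy, hxy⟩ := exists_lt_of_lt_csSup ⟨q0, hq0⟩ hx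
    exact hy.2.2.trans (toReal_mono' μ (Icc_subset_Icc hxy.le le_rfl))

lemma csInf_mem_quantSet {α : ℝ} (hα : α ∈ Icc (0:ℝ) 1) {μ : Measure ℝ} (hμ : IsProb01 μ) :
    sInf (quantSet α μ) ∈ quantSet α μ := by
  haveI := hμ.1
  obtain ⟨q0, hq0⟩ := quantSet_nonempty hα hμ
  have hbdd := quantSet_bddBelow α μ
  have hle : sInf (quantSet α μ) ≤ q0 := csInf_le hbdd hq0
  have hs0 : 0 ≤ sInf (quantSet α μ) := le_csInf ⟨q0, hq0⟩ (fun x hx => hx.1.1)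
  refine ⟨⟨hs0, hle.trans hq0.1.2⟩, ?_, ?_⟩
  · apply le_F_of_forall_gt μ
    intro x hx
    obtain ⟨y, hy, hxy⟩ := exists_lt_of_csInf_lt ⟨q0, hq0⟩ hx
    exact hy.2.1.trans (toReal_mono' μ (Icc_subset_Icc le_rfl hxy.le))
  · exact hq0.2.2.trans (toReal_mono' μ (Icc_subset_Icc hle le_rfl))


lemma mix_zero (μ0 μ1 : Measure ℝ) : mix 0 μ0 μ1 = μ0 := by
  simp [mix]

lemma mix_one (μ0 μ1 : Measure ℝ) : mix 1 μ0 μ1 = μ1 := by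
  simp [mix]

lemma mix_comm (p : ℝ) (μ0 μ1 : Measure ℝ) : mix p μ0 μ1 = mix (1-p) μ1 μ0 := by
  simp only [mix, sub_sub_cancel]
  exact add_comm _ _

lemma mix_toReal {p : ℝ} (hp : p ∈ Icc (0:ℝ) 1) (μ0 μ1 : Measure ℝ)
    (h0 : IsProb01 μ0) (h1 : IsProb01 μ1) (s : Set ℝ) :
    ((mix p μ0 μ1) s).toReal = p * (μ1 s).toReal + (1-p) * (μ0 s).toReal := by
  haveI := h0.1; haveI := h1.1
  have happ : (mix p μ0 μ1) s = ENNReal.ofReal p * μ1 s + ENNReal.ofReal (1-p) * μ0 s := by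
    simp [mix, Measure.add_apply, Measure.smul_apply, smul_eq_mul]
  rw [happ, ENNReal.toReal_add, ENNReal.toReal_mul, ENNReal.toReal_mul,
    ENNReal.toReal_ofReal hp.1, ENNReal.toReal_ofReal (by linarith [hp.2] : (0:ℝ) ≤ 1 - p)]
  · exact ENNReal.mul_ne_top ENNReal.ofReal_ne_top (measure_ne_top _ _)
  · exact ENNReal.mul_ne_top ENNReal.ofReal_ne_top (measure_ne_top _ _)

lemma isProb01_mix {p : ℝ} (hp : p ∈ Icc (0:ℝ) 1) (μ0 μ1 : Measure ℝ)
    (h0 : IsProb01 μ0) (h1 : IsProb01 μ1) : IsProb01 (mix p μ0 μ1) := by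
  haveI := h0.1; haveI := h1.1
  have key : ∀ s : Set ℝ, μ0 s = 1 → μ1 s = 1 → (mix p μ0 μ1) s = 1 := by
    intro s hs0 hs1
    have : (mix p μ0 μ1) s = ENNReal.ofReal p * μ1 s + ENNReal.ofReal (1-p) * μ0 s := by
      simp [mix, Measure.add_apply, Measure.smul_apply, smul_eq_mul]
    rw [this, hs0, hs1, mul_one, mul_one,
      ← ENNReal.ofReal_add hp.1 (by linarith [hp.2] : (0:ℝ) ≤ 1 - p)]
    norm_num
  constructor
  · exact ⟨key univ (measure_univ) (measure_univ)⟩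
  · exact key _ h0.2 h1.2

lemma keyB {α p : ℝ} (hα : α ∈ Icc (0:ℝ) 1) (hp : p ∈ Ioo (0:ℝ) 1) {μ0 μ1 : Measure ℝ}
    (h0 : IsProb01 μ0) (h1 : IsProb01 μ1) {q : ℝ}
    (hq : q ∈ quantSet α (mix p μ0 μ1)) (hgt : sSup (quantSet α μ0) < q) :
    ∀ x ∈ quantSet α μ1, q ≤ x := by
  haveI := h0.1; haveI := h1.1
  have hp' : p ∈ Icc (0:ℝ) 1 := ⟨hp.1.le, hp.2.le⟩
  have hb0 := csSup_mem_quantSet hα h0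
  have hqnot : q ∉ quantSet α μ0 := fun h =>
    absurd (le_csSup (quantSet_bddAbove α μ0) h) (not_le.2 hgt)
  have hF0q : α ≤ (μ0 (Icc 0 q)).toReal :=
    hb0.2.1.trans (toReal_mono' μ0 (Icc_subset_Icc le_rfl hgt.le))
  have hG0q : (μ0 (Icc q 1)).toReal < 1 - α := by
    by_contra hc
    exact hqnot ⟨hq.1, hF0q, not_lt.1 hc⟩
  have hGm := hq.2.2
  rw [mix_toReal hp' μ0 μ1 h0 h1] at hGm
  have hG1q : 1 - α < (μ1 (Icc q 1)).toReal := by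
    have h1p : 0 < 1 - p := by linarith [hp.2]
    nlinarith [hp.1]
  intro x hx
  by_contra hxq
  push_neg at hxq
  have := FG_le_one μ1 h1 hxq
  linarith [hx.2.1]

lemma keyA {α p : ℝ} (hα : α ∈ Icc (0:ℝ) 1) (hp : p ∈ Ioo (0:ℝ) 1) {μ0 μ1 : Measure ℝ}
    (h0 : IsProb01 μ0) (h1 : IsProb01 μ1)
    (hgt : sInf (quantSet α μ0) < sInf (quantSet α (mix p μ0 μ1))) :
    ∀ y ∈ quantSet α μ1, sInf (quantSet α (mix p μ0 μ1)) ≤ y := by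
  haveI := h0.1; haveI := h1.1
  have hp' : p ∈ Icc (0:ℝ) 1 := ⟨hp.1.le, hp.2.le⟩
  have hm := isProb01_mix hp' μ0 μ1 h0 h1
  haveI := hm.1
  have ha0 := csInf_mem_quantSet hα h0
  have ham := csInf_mem_quantSet hα hm
  set am := sInf (quantSet α (mix p μ0 μ1)) with ham_def
  set a0 := sInf (quantSet α μ0) with ha0_def
  have hFx : ∀ x, a0 ≤ x → x < am → (μ1 (Icc 0 x)).toReal < α := by
    intro x hx0 hxm
    have hx01 : x ∈ Icc (0:ℝ) 1 := ⟨ha0.1.1.trans hx0, hxm.le.trans ham.1.2⟩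
    have hGmx : 1 - α ≤ ((mix p μ0 μ1) (Icc x 1)).toReal :=
      ham.2.2.trans (toReal_mono' _ (Icc_subset_Icc hxm.le le_rfl))
    have hxnot : x ∉ quantSet α (mix p μ0 μ1) := fun h =>
      absurd (csInf_le (quantSet_bddBelow _ _) h) (not_le.2 hxm)
    have hFmx : ((mix p μ0 μ1) (Icc 0 x)).toReal < α := by
      by_contra hc
      exact hxnot ⟨hx01, not_lt.1 hc, hGmx⟩
    rw [mix_toReal hp' μ0 μ1 h0 h1] at hFmx
    have hF0x : α ≤ (μ0 (Icc 0 x)).toReal :=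
      ha0.2.1.trans (toReal_mono' μ0 (Icc_subset_Icc le_rfl hx0))
    nlinarith [hp.1, hp.2]
  intro y hy
  by_contra hym
  push_neg at hym
  have hx := hFx (max y a0) (le_max_right _ _) (max_lt hym hgt)
  have : (μ1 (Icc 0 y)).toReal ≤ (μ1 (Icc 0 (max y a0))).toReal :=
    toReal_mono' μ1 (Icc_subset_Icc le_rfl (le_max_left _ _))
  linarith [hy.2.1]

lemma quant_mix_le {α r : ℝ} (hα : α ∈ Icc (0:ℝ) 1) (hr : r ∈ Icc (0:ℝ) 1)
    {μ0 μ1 : Measure ℝ} (h0 : IsProb01 μ0) (h1 : IsProb01 μ1)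
    {p : ℝ} (hp : p ∈ Icc (0:ℝ) 1) :
    quant α r (mix p μ0 μ1) ≤ max (quant α r μ0) (quant α r μ1) := by
  rcases eq_or_lt_of_le hp.1 with h|hp0
  · rw [← h, mix_zero]; exact le_max_left _ _
  rcases eq_or_lt_of_le hp.2 with h|hp1
  · rw [h, mix_one]; exact le_max_right _ _
  have hpo : p ∈ Ioo (0:ℝ) 1 := ⟨hp0, hp1⟩
  haveI := h0.1; haveI := h1.1
  have hm := isProb01_mix hp μ0 μ1 h0 h1
  haveI := hm.1
  set Qm := quantSet α (mix p μ0 μ1) with hQm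
  have hnem : Qm.Nonempty := quantSet_nonempty hα hm
  have hne0 : (quantSet α μ0).Nonempty := quantSet_nonempty hα h0
  have hne1 : (quantSet α μ1).Nonempty := quantSet_nonempty hα h1
  have hab : sInf Qm ≤ sSup Qm :=
    csInf_le_csSup hnem (quantSet_bddBelow _ _) (quantSet_bddAbove _ _)
  have hr1 : 0 ≤ 1 - r := by linarith [hr.2]
  by_cases hbb : sSup Qm ≤ sSup (quantSet α μ0)
  · by_cases haa : sInf Qm ≤ sInf (quantSet α μ0)
    · refine le_max_of_le_left ?_
      unfold quant
      nlinarith [hr.1]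
    · push_neg at haa
      have hQ1 := keyA hα hpo h0 h1 haa
      have ha1 : sInf Qm ≤ sInf (quantSet α μ1) := le_csInf hne1 hQ1
      by_cases hbm1 : sSup Qm ≤ sSup (quantSet α μ1)
      · refine le_max_of_le_right ?_
        unfold quant
        nlinarith [hr.1]
      · push_neg at hbm1
        exfalso
        have hmem : sSup Qm ∈ quantSet α (mix (1-p) μ1 μ0) := by
          rw [← mix_comm]
          exact csSup_mem_quantSet hα hm
        have hQ0 := keyB hα ⟨by linarith [hpo.2], by linarith [hpo.1]⟩ h1 h0 hmem hbm1
        have : sSup Qm ≤ sInf (quantSet α μ0) := le_csInf hne0 hQ0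
        linarith
  · push_neg at hbb
    have hQ1 := keyB hα hpo h0 h1 (csSup_mem_quantSet hα hm) hbb
    have ha1 : sSup Qm ≤ sInf (quantSet α μ1) := le_csInf hne1 hQ1
    have hb1 : sInf (quantSet α μ1) ≤ sSup (quantSet α μ1) :=
      csInf_le_csSup hne1 (quantSet_bddBelow _ _) (quantSet_bddAbove _ _)
    refine le_max_of_le_right ?_
    unfold quant
    nlinarith [hr.1]

end QAux

/-- `sup_{p ∈ [0,1]} q_{α,r}(p·μ1 + (1−p)·μ0) = max{q_{α,r}(μ0), q_{α,r}(μ1)}`,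
and the supremum is attained at `p = 0` or at `p = 1`. -/
theorem stmt1 (α r : ℝ) (hα : α ∈ Icc (0 : ℝ) 1) (hr : r ∈ Icc (0 : ℝ) 1)
    (μ0 μ1 : Measure ℝ) (h0 : IsProb01 μ0) (h1 : IsProb01 μ1) :
    sSup ((fun p => quant α r (mix p μ0 μ1)) '' Icc (0 : ℝ) 1)
        = max (quant α r μ0) (quant α r μ1) ∧
      (quant α r (mix 0 μ0 μ1) = max (quant α r μ0) (quant α r μ1) ∨
        quant α r (mix 1 μ0 μ1) = max (quant α r μ0) (quant α r μ1)) := by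
  have h0mem : quant α r μ0 ∈ (fun p => quant α r (mix p μ0 μ1)) '' Icc (0:ℝ) 1 :=
    ⟨0, by norm_num, by show quant α r (mix 0 μ0 μ1) = _; rw [QAux.mix_zero]⟩
  have h1mem : quant α r μ1 ∈ (fun p => quant α r (mix p μ0 μ1)) '' Icc (0:ℝ) 1 :=
    ⟨1, by norm_num, by show quant α r (mix 1 μ0 μ1) = _; rw [QAux.mix_one]⟩
  have hub : ∀ y ∈ (fun p => quant α r (mix p μ0 μ1)) '' Icc (0:ℝ) 1,
      y ≤ max (quant α r μ0) (quant α r μ1) := by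
    rintro y ⟨p, hp, rfl⟩
    exact QAux.quant_mix_le hα hr h0 h1 hp
  have hbdd : BddAbove ((fun p => quant α r (mix p μ0 μ1)) '' Icc (0:ℝ) 1) :=
    ⟨max (quant α r μ0) (quant α r μ1), hub⟩
  constructor
  · apply le_antisymm
    · exact csSup_le ⟨_, h0mem⟩ hub
    · exact max_le (le_csSup hbdd h0mem) (le_csSup hbdd h1mem)
  · rcases le_total (quant α r μ0) (quant α r μ1) with h|h
    · right; rw [QAux.mix_one]; exact (max_eq_right h).symm
    · left; rw [QAux.mix_zero]; exact (max_eq_left h).symm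
end
end

section
/- In the no-data setup with α ∈ (0,1) and r ∈ [0,1]: for every treatment rule δ ∈ [0,1] there exist a0, a1 ∈ [0,1] such that R(δ, (Ber(a0), Ber(a1))) = 1. Consequently, for every δ ∈ [0,1], the supremum over all states (μ0, μ1) of R(δ, (μ0, μ1)) equals 1 and is attained, and every treatment rule is minimax regret. -/
open MeasureTheory Set

noncomputable section

/-- Regret in the no-data setup. -/
def regretND (α r δ : ℝ) (μ0 μ1 : Measure ℝ) : ℝ :=
  max (quant α r μ0) (quant α r μ1) - quant α r (mix δ μ0 μ1)

/-- The set of regret values of the rule `δ` over all states. -/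
def regretSetND (α r δ : ℝ) : Set ℝ :=
  {v | ∃ μ0 μ1 : Measure ℝ, IsProb01 μ0 ∧ IsProb01 μ1 ∧ v = regretND α r δ μ0 μ1}

/-!
A Bernoulli law `Ber a` has the single `α`-quantile `0` when `a > α` and `1` when `a < α`, so its
`(α, r)`-quantile is `0` or `1` whatever `r` is. Mixing `Ber a0` with `Ber a1` gives
`Ber (δ a1 + (1 - δ) a0)`; choosing one arm below `α` and the other (and the mixture) above `α`
makes the best arm's quantile `1` and the mixture's `0`. Since every `(α, r)`-quantile lies in
`[0, 1]`, regret never exceeds `1`, so every rule attains the same worst-case regret `1`.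
-/

lemma quant_mem_Icc (α : ℝ) {r : ℝ} (hr : r ∈ Icc (0 : ℝ) 1) (μ : Measure ℝ) :
    quant α r μ ∈ Icc (0 : ℝ) 1 := by
  have hsub : quantSet α μ ⊆ Icc 0 1 := fun q hq => hq.1
  have hsup : sSup (quantSet α μ) ∈ Icc (0 : ℝ) 1 :=
    ⟨Real.sSup_nonneg fun q hq => (hsub hq).1, Real.sSup_le (fun q hq => (hsub hq).2) zero_le_one⟩
  have hinf : sInf (quantSet α μ) ∈ Icc (0 : ℝ) 1 :=
    ⟨Real.sInf_nonneg fun q hq => (hsub hq).1,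
      (Real.sInf_le_sSup _ ⟨0, fun q hq => (hsub hq).1⟩ ⟨1, fun q hq => (hsub hq).2⟩).trans
        hsup.2⟩
  exact convex_Icc (0 : ℝ) 1 hsup hinf hr.1 (sub_nonneg.2 hr.2) (by ring)

lemma regretND_le_one {α r : ℝ} (hr : r ∈ Icc (0 : ℝ) 1) (δ : ℝ) (μ0 μ1 : Measure ℝ) :
    regretND α r δ μ0 μ1 ≤ 1 := by
  have h0 := quant_mem_Icc α hr μ0
  have h1 := quant_mem_Icc α hr μ1
  have hmix := quant_mem_Icc α hr (mix δ μ0 μ1)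
  rw [regretND]
  linarith [max_le h0.2 h1.2, hmix.1]

lemma quant_eq_of_quantSet_eq_singleton {α r x : ℝ} {μ : Measure ℝ} (h : quantSet α μ = {x}) :
    quant α r μ = x := by
  rw [quant, h, csSup_singleton, csInf_singleton]
  ring

section Ber

variable {a : ℝ}

lemma Ber_apply (s : Set ℝ) :
    Ber a s = ENNReal.ofReal a * s.indicator 1 0 + ENNReal.ofReal (1 - a) * s.indicator 1 1 := by
  simp [Ber, Measure.dirac_apply, smul_eq_mul]

lemma Ber_Icc_zero_left {q : ℝ} (hq0 : 0 ≤ q) (hq1 : q < 1) :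
    Ber a (Icc 0 q) = ENNReal.ofReal a := by
  rw [Ber_apply, indicator_of_mem (by simp [hq0]), indicator_of_notMem (by simp [hq1.not_ge])]
  simp

lemma Ber_Icc_right_one {q : ℝ} (hq0 : 0 < q) (hq1 : q ≤ 1) :
    Ber a (Icc q 1) = ENNReal.ofReal (1 - a) := by
  rw [Ber_apply, indicator_of_notMem (by simp [hq0.not_ge]), indicator_of_mem (by simp [hq1])]
  simp

lemma Ber_eq_one_of_mem {s : Set ℝ} (ha : a ∈ Icc (0 : ℝ) 1) (h0 : (0 : ℝ) ∈ s)
    (h1 : (1 : ℝ) ∈ s) : Ber a s = 1 := by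
  rw [Ber_apply, indicator_of_mem h0, indicator_of_mem h1]
  simp only [Pi.one_apply, mul_one]
  rw [← ENNReal.ofReal_add ha.1 (sub_nonneg.2 ha.2), add_sub_cancel, ENNReal.ofReal_one]

lemma isProb01_Ber (ha : a ∈ Icc (0 : ℝ) 1) : IsProb01 (Ber a) :=
  ⟨⟨Ber_eq_one_of_mem ha (mem_univ _) (mem_univ _)⟩,
    Ber_eq_one_of_mem ha (by norm_num) (by norm_num)⟩

lemma quantSet_Ber_of_lt {α : ℝ} (hα : 0 < α) (h : α < a) (ha : a ≤ 1) :
    quantSet α (Ber a) = {0} := by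
  ext q
  simp only [quantSet, mem_ofPred_eq, mem_singleton_iff, mem_Icc]
  constructor
  · rintro ⟨⟨hq0, hq1⟩, -, hright⟩
    by_contra hq
    rw [Ber_Icc_right_one (lt_of_le_of_ne hq0 (Ne.symm hq)) hq1,
      ENNReal.toReal_ofReal (by linarith)] at hright
    linarith
  · rintro rfl
    refine ⟨⟨le_rfl, zero_le_one⟩, ?_, ?_⟩
    · rw [Ber_Icc_zero_left le_rfl zero_lt_one, ENNReal.toReal_ofReal (by linarith)]
      exact h.le
    · rw [Ber_eq_one_of_mem ⟨by linarith, ha⟩ (by norm_num) (by norm_num)]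
      simp [hα.le]

lemma quantSet_Ber_of_gt {α : ℝ} (hα : α < 1) (h : a < α) (ha : 0 ≤ a) :
    quantSet α (Ber a) = {1} := by
  ext q
  simp only [quantSet, mem_ofPred_eq, mem_singleton_iff, mem_Icc]
  constructor
  · rintro ⟨⟨hq0, hq1⟩, hleft, -⟩
    by_contra hq
    rw [Ber_Icc_zero_left hq0 (lt_of_le_of_ne hq1 hq), ENNReal.toReal_ofReal ha] at hleft
    linarith
  · rintro rfl
    refine ⟨⟨zero_le_one, le_rfl⟩, ?_, ?_⟩
    · rw [Ber_eq_one_of_mem ⟨ha, by linarith⟩ (by norm_num) (by norm_num)]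
      simp [hα.le]
    · rw [Ber_Icc_right_one zero_lt_one le_rfl, ENNReal.toReal_ofReal (by linarith)]
      linarith

lemma mix_Ber {δ a0 a1 : ℝ} (hδ : δ ∈ Icc (0 : ℝ) 1) (ha0 : a0 ∈ Icc (0 : ℝ) 1)
    (ha1 : a1 ∈ Icc (0 : ℝ) 1) :
    mix δ (Ber a0) (Ber a1) = Ber (δ * a1 + (1 - δ) * a0) := by
  obtain ⟨hδ0, hδ1⟩ := hδ
  have hδ' : 0 ≤ 1 - δ := sub_nonneg.2 hδ1
  have hb0 : 0 ≤ 1 - a0 := sub_nonneg.2 ha0.2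
  have hb1 : 0 ≤ 1 - a1 := sub_nonneg.2 ha1.2
  unfold mix Ber
  rw [smul_add, smul_add, smul_smul, smul_smul, smul_smul, smul_smul,
    ← ENNReal.ofReal_mul hδ0, ← ENNReal.ofReal_mul hδ0, ← ENNReal.ofReal_mul hδ',
    ← ENNReal.ofReal_mul hδ',
    show 1 - (δ * a1 + (1 - δ) * a0) = δ * (1 - a1) + (1 - δ) * (1 - a0) by ring,
    ENNReal.ofReal_add (mul_nonneg hδ0 ha1.1) (mul_nonneg hδ' ha0.1),
    ENNReal.ofReal_add (mul_nonneg hδ0 hb1) (mul_nonneg hδ' hb0), add_smul, add_smul]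
  abel

end Ber

lemma regretND_swap (α r δ : ℝ) (μ0 μ1 : Measure ℝ) :
    regretND α r δ μ0 μ1 = regretND α r (1 - δ) μ1 μ0 := by
  rw [regretND, regretND, max_comm, mix, mix, sub_sub_cancel, add_comm]

lemma regretND_Ber_eq_one {α r δ a0 a1 : ℝ} (hα : α ∈ Ioo (0 : ℝ) 1) (hδ : δ ∈ Icc (0 : ℝ) 1)
    (ha1 : 0 ≤ a1) (ha1α : a1 < α) (hαa0 : α < a0) (ha0 : a0 ≤ 1)
    (hmix : α < δ * a1 + (1 - δ) * a0) :
    regretND α r δ (Ber a0) (Ber a1) = 1 := by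
  have hmix1 : δ * a1 + (1 - δ) * a0 ≤ 1 := by nlinarith [hδ.1, hδ.2]
  rw [regretND, mix_Ber hδ ⟨by linarith, ha0⟩ ⟨ha1, by linarith⟩,
    quant_eq_of_quantSet_eq_singleton (quantSet_Ber_of_lt hα.1 hαa0 ha0),
    quant_eq_of_quantSet_eq_singleton (quantSet_Ber_of_gt hα.2 ha1α ha1),
    quant_eq_of_quantSet_eq_singleton (quantSet_Ber_of_lt hα.1 hmix hmix1)]
  norm_num

/-- For `δ ≤ 1/2` the low arm `Ber (α ^ 2)` has too little weight to pull the mixture below `α`: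
`1 - δ (1 - α ^ 2) - α = (1 - α) (1 - δ (1 + α)) > 0`. -/
lemma regretND_Ber_one_sq_eq_one {α r δ : ℝ} (hα : α ∈ Ioo (0 : ℝ) 1)
    (hδ : δ ∈ Icc (0 : ℝ) (1 / 2)) :
    regretND α r δ (Ber 1) (Ber (α ^ 2)) = 1 := by
  obtain ⟨hα0, hα1⟩ := hα
  refine regretND_Ber_eq_one ⟨hα0, hα1⟩ ⟨hδ.1, by linarith [hδ.2]⟩ (sq_nonneg α)
    (by nlinarith) hα1 le_rfl ?_
  have : 0 < (1 - α) * (1 - δ * (1 + α)) := mul_pos (by linarith) (by nlinarith [hδ.2])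
  nlinarith

lemma exists_regretND_Ber_eq_one {α r δ : ℝ} (hα : α ∈ Ioo (0 : ℝ) 1) (hδ : δ ∈ Icc (0 : ℝ) 1) :
    ∃ a0 ∈ Icc (0 : ℝ) 1, ∃ a1 ∈ Icc (0 : ℝ) 1, regretND α r δ (Ber a0) (Ber a1) = 1 := by
  have hsq : α ^ 2 ∈ Icc (0 : ℝ) 1 := ⟨sq_nonneg α, by nlinarith [hα.1, hα.2]⟩
  rcases le_total δ (1 / 2) with hδ2 | hδ2
  · exact ⟨1, right_mem_Icc.2 zero_le_one, α ^ 2, hsq,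
      regretND_Ber_one_sq_eq_one hα ⟨hδ.1, hδ2⟩⟩
  · refine ⟨α ^ 2, hsq, 1, right_mem_Icc.2 zero_le_one, ?_⟩
    rw [regretND_swap]
    exact regretND_Ber_one_sq_eq_one hα ⟨by linarith [hδ.2], by linarith⟩

lemma isGreatest_regretSetND_one {α r δ : ℝ} (hα : α ∈ Ioo (0 : ℝ) 1) (hr : r ∈ Icc (0 : ℝ) 1)
    (hδ : δ ∈ Icc (0 : ℝ) 1) : IsGreatest (regretSetND α r δ) 1 := by
  obtain ⟨a0, ha0, a1, ha1, hreg⟩ := exists_regretND_Ber_eq_one (r := r) hα hδ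
  refine ⟨⟨Ber a0, Ber a1, isProb01_Ber ha0, isProb01_Ber ha1, hreg.symm⟩, ?_⟩
  rintro v ⟨μ0, μ1, -, -, rfl⟩
  exact regretND_le_one hr δ μ0 μ1

/-- in the no-data setup with `α ∈ (0,1)`, for every rule `δ ∈ [0,1]` there are
Bernoulli marginals giving regret 1; hence the supremum of regret over states equals 1, is
attained, and every rule is minimax regret. -/
theorem stmt3 (α r : ℝ) (hα : α ∈ Ioo (0 : ℝ) 1) (hr : r ∈ Icc (0 : ℝ) 1)
    (δ : ℝ) (hδ : δ ∈ Icc (0 : ℝ) 1) :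
    (∃ a0 ∈ Icc (0 : ℝ) 1, ∃ a1 ∈ Icc (0 : ℝ) 1,
        regretND α r δ (Ber a0) (Ber a1) = 1) ∧
    IsGreatest (regretSetND α r δ) 1 ∧
    (∀ δ' ∈ Icc (0 : ℝ) 1, sSup (regretSetND α r δ) ≤ sSup (regretSetND α r δ')) := by
  refine ⟨exists_regretND_Ber_eq_one hα hδ, isGreatest_regretSetND_one hα hr hδ, ?_⟩
  intro δ' hδ'
  rw [(isGreatest_regretSetND_one hα hr hδ).csSup_eq,
    (isGreatest_regretSetND_one hα hr hδ').csSup_eq]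
end
end

section
/- Fixed-design setup with α = 1 and r = 0. (a) If δ is a treatment rule such that for every state (μ0, μ1) the induced treatment probability p = ∫ δ d(μ0^{⊗N0} ⊗ μ1^{⊗N1}) lies in the open interval (0,1), then R(δ,(μ0,μ1)) = 0 for every state; in particular sup over states of R(δ,·) = 0 and δ is minimax regret. (b) Each of the constant rules δ ≡ 0 and δ ≡ 1 has supremum of regret over states equal to 1. -/
open MeasureTheory Set

noncomputable section

/-- Law of the sample in the fixed design: the first `N0` coordinates are i.i.d. from `μ0`,
the last `N1` coordinates are i.i.d. from `μ1`. -/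
def sampleLawFD (N0 N1 : ℕ) (μ0 μ1 : Measure ℝ) : Measure (Fin (N0 + N1) → ℝ) :=
  Measure.pi fun i => if (i : ℕ) < N0 then μ0 else μ1

/-- Regret of a treatment rule in the fixed design. -/
def regretFD (α r : ℝ) (N0 N1 : ℕ) (δ : (Fin (N0 + N1) → ℝ) → ℝ)
    (μ0 μ1 : Measure ℝ) : ℝ :=
  max (quant α r μ0) (quant α r μ1) -
    quant α r (mix (∫ w, δ w ∂(sampleLawFD N0 N1 μ0 μ1)) μ0 μ1)

/-- The set of regret values of the rule `δ` over all states, fixed design. -/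
def regretSetFD (α r : ℝ) (N0 N1 : ℕ) (δ : (Fin (N0 + N1) → ℝ) → ℝ) : Set ℝ :=
  {v | ∃ μ0 μ1 : Measure ℝ, IsProb01 μ0 ∧ IsProb01 μ1 ∧ v = regretFD α r N0 N1 δ μ0 μ1}

section Aux

lemma mem_quantSet_one {μ : Measure ℝ} (hμ : IsProb01 μ) {q : ℝ} :
    q ∈ quantSet 1 μ ↔ q ∈ Icc (0 : ℝ) 1 ∧ μ (Icc 0 q) = 1 := by
  haveI := hμ.1
  constructor
  · rintro ⟨h1, h2, -⟩
    refine ⟨h1, le_antisymm prob_le_one ?_⟩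
    have hfin : μ (Icc (0:ℝ) q) ≠ ⊤ := measure_ne_top μ _
    exact (ENNReal.toReal_le_toReal ENNReal.one_ne_top hfin).mp (by simpa using h2)
  · rintro ⟨h1, h2⟩
    refine ⟨h1, by simp [h2], by norm_num⟩

lemma one_mem_quantSet_one {μ : Measure ℝ} (hμ : IsProb01 μ) :
    (1 : ℝ) ∈ quantSet 1 μ :=
  (mem_quantSet_one hμ).2 ⟨⟨zero_le_one, le_refl 1⟩, hμ.2⟩

lemma quantSet_one_eq_Icc {μ : Measure ℝ} (hμ : IsProb01 μ) :
    quantSet 1 μ = Icc (sInf (quantSet 1 μ)) 1 := by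
  haveI := hμ.1
  have h1 := one_mem_quantSet_one hμ
  have hbdd : BddBelow (quantSet 1 μ) := ⟨0, fun q hq => hq.1.1⟩
  have hne : (quantSet 1 μ).Nonempty := ⟨1, h1⟩
  set m := sInf (quantSet 1 μ) with hmdef
  have hm0 : 0 ≤ m := le_csInf hne fun q hq => hq.1.1
  have hm1 : m ≤ 1 := csInf_le hbdd h1
  have hq0 : ∀ q ∈ quantSet 1 μ, μ (Ioi q) = 0 := by
    intro q hq
    have hμq := ((mem_quantSet_one hμ).1 hq).2
    have hc : μ ((Icc (0:ℝ) q)ᶜ) = 0 :=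
      (prob_compl_eq_zero_iff measurableSet_Icc).2 hμq
    refine measure_mono_null ?_ hc
    intro x hx hx'
    exact absurd hx'.2 (not_le.2 hx)
  have hIoi : μ (Ioi m) = 0 := by
    have hsub : Ioi m ⊆ ⋃ n : ℕ, Ioi (m + 1 / (n + 1)) := by
      intro x hx
      obtain ⟨n, hn⟩ := exists_nat_one_div_lt (sub_pos.2 hx : (0:ℝ) < x - m)
      exact mem_iUnion.2 ⟨n, by simp only [mem_Ioi]; linarith⟩
    refine measure_mono_null hsub (measure_iUnion_null fun n => ?_)
    have hpos : m < m + 1 / (n + 1 : ℝ) := by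
      have : (0:ℝ) < 1 / (n + 1) := by positivity
      linarith
    obtain ⟨q, hqS, hqlt⟩ := exists_lt_of_csInf_lt hne hpos
    exact measure_mono_null (fun x hx => lt_trans hqlt hx) (hq0 q hqS)
  have hmem : μ (Icc 0 m) = 1 := by
    have hsub : Icc (0:ℝ) 1 ⊆ Icc 0 m ∪ Ioi m := fun x hx =>
      (le_or_gt x m).imp (fun h => ⟨hx.1, h⟩) id
    have h2 : (1:ENNReal) ≤ μ (Icc 0 m) + μ (Ioi m) :=
      hμ.2 ▸ le_trans (measure_mono hsub) (measure_union_le _ _)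
    rw [hIoi, add_zero] at h2
    exact le_antisymm prob_le_one h2
  ext q
  rw [mem_quantSet_one hμ]
  constructor
  · rintro ⟨hq1, hq2⟩
    exact ⟨csInf_le hbdd ((mem_quantSet_one hμ).2 ⟨hq1, hq2⟩), hq1.2⟩
  · rintro ⟨hq1, hq2⟩
    refine ⟨⟨le_trans hm0 hq1, hq2⟩, le_antisymm prob_le_one ?_⟩
    exact hmem ▸ measure_mono (Icc_subset_Icc_right hq1)

lemma quant_one_zero (μ : Measure ℝ) : quant 1 0 μ = sInf (quantSet 1 μ) := by
  simp [quant]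

lemma quant_nonneg (μ : Measure ℝ) : 0 ≤ quant 1 0 μ := by
  rw [quant_one_zero]
  exact Real.sInf_nonneg fun q hq => hq.1.1

lemma quant_le_one {μ : Measure ℝ} (hμ : IsProb01 μ) : quant 1 0 μ ≤ 1 := by
  rw [quant_one_zero]
  exact csInf_le ⟨0, fun q hq => hq.1.1⟩ (one_mem_quantSet_one hμ)

lemma mix_apply (p : ℝ) (μ0 μ1 : Measure ℝ) (s : Set ℝ) :
    mix p μ0 μ1 s = ENNReal.ofReal p * μ1 s + ENNReal.ofReal (1 - p) * μ0 s := by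
  simp [mix]

lemma isProb01_mix {p : ℝ} (hp0 : 0 ≤ p) (hp1 : p ≤ 1) {μ0 μ1 : Measure ℝ}
    (h0 : IsProb01 μ0) (h1 : IsProb01 μ1) : IsProb01 (mix p μ0 μ1) := by
  haveI := h0.1; haveI := h1.1
  have key : ∀ s : Set ℝ, μ0 s = 1 → μ1 s = 1 → mix p μ0 μ1 s = 1 := by
    intro s hs0 hs1
    rw [mix_apply, hs0, hs1, mul_one, mul_one,
      ← ENNReal.ofReal_add hp0 (by linarith)]
    norm_num
  exact ⟨⟨key univ (measure_univ) (measure_univ)⟩, key _ h0.2 h1.2⟩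

lemma mix_self {p : ℝ} (hp0 : 0 ≤ p) (hp1 : p ≤ 1) (μ : Measure ℝ) :
    mix p μ μ = μ := by
  rw [mix, ← add_smul, ← ENNReal.ofReal_add hp0 (by linarith)]
  norm_num

lemma quantSet_one_mix {p : ℝ} (hp : p ∈ Ioo (0:ℝ) 1) {μ0 μ1 : Measure ℝ}
    (h0 : IsProb01 μ0) (h1 : IsProb01 μ1) :
    quantSet 1 (mix p μ0 μ1) = quantSet 1 μ0 ∩ quantSet 1 μ1 := by
  haveI := h0.1; haveI := h1.1
  have hmix := isProb01_mix hp.1.le hp.2.le h0 h1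
  haveI := hmix.1
  ext q
  rw [mem_inter_iff, mem_quantSet_one hmix, mem_quantSet_one h0, mem_quantSet_one h1]
  constructor
  · rintro ⟨hq1, hq2⟩
    have hc : mix p μ0 μ1 ((Icc (0:ℝ) q)ᶜ) = 0 :=
      (prob_compl_eq_zero_iff measurableSet_Icc).2 hq2
    rw [mix_apply] at hc
    have h2 := add_eq_zero.1 hc
    have hz0 : μ0 ((Icc (0:ℝ) q)ᶜ) = 0 := by
      rcases mul_eq_zero.1 h2.2 with h | h
      · exact absurd h (ENNReal.ofReal_pos.2 (by linarith [hp.2])).ne'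
      · exact h
    have hz1 : μ1 ((Icc (0:ℝ) q)ᶜ) = 0 := by
      rcases mul_eq_zero.1 h2.1 with h | h
      · exact absurd h (ENNReal.ofReal_pos.2 hp.1).ne'
      · exact h
    exact ⟨⟨hq1, (prob_compl_eq_zero_iff measurableSet_Icc).1 hz0⟩,
      ⟨hq1, (prob_compl_eq_zero_iff measurableSet_Icc).1 hz1⟩⟩
  · rintro ⟨⟨hq1, hs0⟩, ⟨-, hs1⟩⟩
    refine ⟨hq1, ?_⟩
    rw [mix_apply, hs0, hs1, mul_one, mul_one,
      ← ENNReal.ofReal_add hp.1.le (by linarith [hp.2])]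
    norm_num

lemma quant_mix {p : ℝ} (hp : p ∈ Ioo (0:ℝ) 1) {μ0 μ1 : Measure ℝ}
    (h0 : IsProb01 μ0) (h1 : IsProb01 μ1) :
    quant 1 0 (mix p μ0 μ1) = max (quant 1 0 μ0) (quant 1 0 μ1) := by
  have hb0 : BddBelow (quantSet 1 μ0) := ⟨0, fun q hq => hq.1.1⟩
  have hb1 : BddBelow (quantSet 1 μ1) := ⟨0, fun q hq => hq.1.1⟩
  have h00 : sInf (quantSet 1 μ0) ≤ 1 := csInf_le hb0 (one_mem_quantSet_one h0)
  have h11 : sInf (quantSet 1 μ1) ≤ 1 := csInf_le hb1 (one_mem_quantSet_one h1)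
  have key : quantSet 1 μ0 ∩ quantSet 1 μ1
      = Icc (sInf (quantSet 1 μ0) ⊔ sInf (quantSet 1 μ1)) 1 := by
    conv_lhs => rw [quantSet_one_eq_Icc h0, quantSet_one_eq_Icc h1]
    rw [Icc_inter_Icc, min_self]
  rw [quant_one_zero, quant_one_zero, quant_one_zero, quantSet_one_mix hp h0 h1, key,
    csInf_Icc (sup_le h00 h11)]

lemma isProbabilityMeasure_sampleLawFD (N0 N1 : ℕ) {μ0 μ1 : Measure ℝ}
    (h0 : IsProb01 μ0) (h1 : IsProb01 μ1) :
    IsProbabilityMeasure (sampleLawFD N0 N1 μ0 μ1) := by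
  haveI := h0.1; haveI := h1.1
  haveI : ∀ i : Fin (N0 + N1), IsProbabilityMeasure (if (i : ℕ) < N0 then μ0 else μ1) :=
    fun i => by split <;> infer_instance
  rw [sampleLawFD]; infer_instance

lemma integral_mem_Icc {δ : (Fin (N0 + N1) → ℝ) → ℝ} (hδ : ∀ w, δ w ∈ Icc (0:ℝ) 1)
    (μ : Measure (Fin (N0 + N1) → ℝ)) [IsProbabilityMeasure μ] :
    (∫ w, δ w ∂μ) ∈ Icc (0:ℝ) 1 := by
  by_cases hInt : Integrable δ μ
  · constructor
    · exact integral_nonneg fun w => (hδ w).1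
    · calc ∫ w, δ w ∂μ ≤ ∫ _, (1:ℝ) ∂μ :=
            integral_mono hInt (integrable_const 1) fun w => (hδ w).2
        _ = 1 := by simp
  · rw [integral_undef hInt]; norm_num

lemma regretFD_le_one {δ : (Fin (N0 + N1) → ℝ) → ℝ} {μ0 μ1 : Measure ℝ}
    (h0 : IsProb01 μ0) (h1 : IsProb01 μ1) :
    regretFD 1 0 N0 N1 δ μ0 μ1 ≤ 1 := by
  have h := quant_nonneg (mix (∫ w, δ w ∂(sampleLawFD N0 N1 μ0 μ1)) μ0 μ1)
  have hm : max (quant 1 0 μ0) (quant 1 0 μ1) ≤ 1 :=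
    max_le (quant_le_one h0) (quant_le_one h1)
  unfold regretFD
  linarith

lemma isProb01_dirac {x : ℝ} (hx : x ∈ Icc (0:ℝ) 1) : IsProb01 (Measure.dirac x) :=
  ⟨inferInstance, Measure.dirac_apply_of_mem hx⟩

lemma quant_dirac_zero : quant 1 0 (Measure.dirac (0:ℝ)) = 0 := by
  have h : quantSet 1 (Measure.dirac (0:ℝ)) = Icc 0 1 := by
    ext q
    rw [mem_quantSet_one (isProb01_dirac (by norm_num))]
    constructor
    · exact fun h => h.1
    · intro hq
      exact ⟨hq, Measure.dirac_apply_of_mem ⟨le_refl 0, hq.1⟩⟩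
  rw [quant_one_zero, h, csInf_Icc zero_le_one]

lemma quant_dirac_one : quant 1 0 (Measure.dirac (1:ℝ)) = 1 := by
  have h : quantSet 1 (Measure.dirac (1:ℝ)) = {1} := by
    ext q
    rw [mem_quantSet_one (isProb01_dirac (by norm_num))]
    constructor
    · rintro ⟨hq, h2⟩
      by_contra hne
      have hlt : q < 1 := lt_of_le_of_ne hq.2 hne
      have : Measure.dirac (1:ℝ) (Icc 0 q) = 0 := by
        rw [Measure.dirac_apply' _ measurableSet_Icc,
          indicator_of_notMem (fun h => absurd h.2 (not_le.2 hlt))]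
      rw [this] at h2
      exact zero_ne_one h2
    · rintro rfl
      exact ⟨⟨zero_le_one, le_refl 1⟩, Measure.dirac_apply_of_mem ⟨zero_le_one, le_refl 1⟩⟩
  rw [quant_one_zero, h, csInf_singleton]

lemma mix_zero (μ0 μ1 : Measure ℝ) : mix 0 μ0 μ1 = μ0 := by
  simp [mix]

lemma mix_one (μ0 μ1 : Measure ℝ) : mix 1 μ0 μ1 = μ1 := by
  simp [mix]

/-- For any rule with values in [0,1], the regret at the state (dirac 0, dirac 0) is 0. -/
lemma regretFD_diag_zero {δ : (Fin (N0 + N1) → ℝ) → ℝ} (hδ : ∀ w, δ w ∈ Icc (0:ℝ) 1) :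
    regretFD 1 0 N0 N1 δ (Measure.dirac 0) (Measure.dirac 0) = 0 := by
  have hprob := isProbabilityMeasure_sampleLawFD N0 N1
    (isProb01_dirac (by norm_num : (0:ℝ) ∈ Icc (0:ℝ) 1))
    (isProb01_dirac (by norm_num : (0:ℝ) ∈ Icc (0:ℝ) 1))
  haveI := hprob
  have hp := integral_mem_Icc hδ (sampleLawFD N0 N1 (Measure.dirac 0) (Measure.dirac 0))
  unfold regretFD
  rw [mix_self hp.1 hp.2, max_self, sub_self]

end Aux

/-- fixed design with `α = 1`, `r = 0`. (a) If the induced treatment probability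
lies in `(0,1)` for every state, then regret vanishes at every state, the supremum of regret is
0, and the rule is minimax regret. (b) The constant rules `0` and `1` have supremum of regret
equal to 1. -/
theorem stmt5 (N0 N1 : ℕ) :
    (∀ δ : (Fin (N0 + N1) → ℝ) → ℝ, Measurable δ → (∀ w, δ w ∈ Icc (0 : ℝ) 1) →
      (∀ μ0 μ1 : Measure ℝ, IsProb01 μ0 → IsProb01 μ1 →
        (∫ w, δ w ∂(sampleLawFD N0 N1 μ0 μ1)) ∈ Ioo (0 : ℝ) 1) →
      (∀ μ0 μ1 : Measure ℝ, IsProb01 μ0 → IsProb01 μ1 →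
        regretFD 1 0 N0 N1 δ μ0 μ1 = 0) ∧
      sSup (regretSetFD 1 0 N0 N1 δ) = 0 ∧
      (∀ δ' : (Fin (N0 + N1) → ℝ) → ℝ, Measurable δ' → (∀ w, δ' w ∈ Icc (0 : ℝ) 1) →
        sSup (regretSetFD 1 0 N0 N1 δ) ≤ sSup (regretSetFD 1 0 N0 N1 δ'))) ∧
    sSup (regretSetFD 1 0 N0 N1 fun _ => 0) = 1 ∧
    sSup (regretSetFD 1 0 N0 N1 fun _ => 1) = 1 := by
  have hdiag0 : ∀ δ : (Fin (N0 + N1) → ℝ) → ℝ, (∀ w, δ w ∈ Icc (0:ℝ) 1) →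
      (0:ℝ) ∈ regretSetFD 1 0 N0 N1 δ :=
    fun δ hδ => ⟨Measure.dirac 0, Measure.dirac 0, isProb01_dirac (by norm_num),
      isProb01_dirac (by norm_num), (regretFD_diag_zero hδ).symm⟩
  have hbdd : ∀ δ : (Fin (N0 + N1) → ℝ) → ℝ, BddAbove (regretSetFD 1 0 N0 N1 δ) := by
    intro δ
    refine ⟨1, ?_⟩
    rintro v ⟨μ0, μ1, h0, h1, rfl⟩
    exact regretFD_le_one h0 h1
  refine ⟨?_, ?_, ?_⟩
  · intro δ hmeas hδ hopen
    have hzero : ∀ μ0 μ1 : Measure ℝ, IsProb01 μ0 → IsProb01 μ1 →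
        regretFD 1 0 N0 N1 δ μ0 μ1 = 0 := by
      intro μ0 μ1 h0 h1
      unfold regretFD
      rw [quant_mix (hopen μ0 μ1 h0 h1) h0 h1, sub_self]
    have hsup : sSup (regretSetFD 1 0 N0 N1 δ) = 0 := by
      have hset : regretSetFD 1 0 N0 N1 δ = {0} := by
        ext v
        constructor
        · rintro ⟨μ0, μ1, h0, h1, rfl⟩
          exact hzero μ0 μ1 h0 h1
        · rintro rfl
          exact hdiag0 δ hδ
      rw [hset, csSup_singleton]
    refine ⟨hzero, hsup, ?_⟩
    intro δ' hmeas' hδ'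
    rw [hsup]
    exact le_csSup (hbdd δ') (hdiag0 δ' hδ')
  · have h1mem : (1:ℝ) ∈ regretSetFD 1 0 N0 N1 (fun _ => 0) := by
      refine ⟨Measure.dirac 0, Measure.dirac 1, isProb01_dirac (by norm_num),
        isProb01_dirac (by norm_num), ?_⟩
      unfold regretFD
      rw [integral_zero, mix_zero, quant_dirac_zero, quant_dirac_one]
      norm_num
    refine le_antisymm (csSup_le ⟨1, h1mem⟩ ?_) (le_csSup (hbdd _) h1mem)
    rintro v ⟨μ0, μ1, h0, h1, rfl⟩
    exact regretFD_le_one h0 h1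
  · have h1mem : (1:ℝ) ∈ regretSetFD 1 0 N0 N1 (fun _ => 1) := by
      refine ⟨Measure.dirac 1, Measure.dirac 0, isProb01_dirac (by norm_num),
        isProb01_dirac (by norm_num), ?_⟩
      haveI := isProbabilityMeasure_sampleLawFD N0 N1
        (isProb01_dirac (by norm_num : (1:ℝ) ∈ Icc (0:ℝ) 1))
        (isProb01_dirac (by norm_num : (0:ℝ) ∈ Icc (0:ℝ) 1))
      unfold regretFD
      have hint : (∫ _w, (1:ℝ) ∂(sampleLawFD N0 N1 (Measure.dirac 1) (Measure.dirac 0))) = 1 := by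
        simp
      rw [hint, mix_one, quant_dirac_zero, quant_dirac_one]
      norm_num
    refine le_antisymm (csSup_le ⟨1, h1mem⟩ ?_) (le_csSup (hbdd _) h1mem)
    rintro v ⟨μ0, μ1, h0, h1, rfl⟩
    exact regretFD_le_one h0 h1
end
end

section
/- Random-assignment setup; assume (α ∈ (0,1) and r ∈ [0,1]) or (α = 0 and r = 1). For every treatment rule δ there exist a0, a1 ∈ [0,1] such that R(δ, (Ber(a0), Ber(a1))) = 1. Consequently, for every treatment rule δ, the supremum over all states (μ0, μ1) of R(δ,(μ0,μ1)) equals 1 and is attained, and every treatment rule is minimax regret. -/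
open MeasureTheory Set

noncomputable section

/-- Law of one observation under random assignment with assignment probability `pT`:
`(1 - pT)·(δ₀ ⊗ μ0) + pT·(δ₁ ⊗ μ1)` on `{0,1} × [0,1] ⊆ ℝ × ℝ` (first coordinate:
treatment status). -/
def obsLawRA (pT : ℝ) (μ0 μ1 : Measure ℝ) : Measure (ℝ × ℝ) :=
  ENNReal.ofReal (1 - pT) • ((Measure.dirac (0 : ℝ)).prod μ0) +
    ENNReal.ofReal pT • ((Measure.dirac (1 : ℝ)).prod μ1)

/-- Regret of a treatment rule in the random-assignment design. -/
def regretRA (α r : ℝ) (N : ℕ) (pT : ℝ) (δ : (Fin N → ℝ × ℝ) → ℝ)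
    (μ0 μ1 : Measure ℝ) : ℝ :=
  max (quant α r μ0) (quant α r μ1) -
    quant α r
      (mix (∫ w, δ w ∂(Measure.pi fun _ : Fin N => obsLawRA pT μ0 μ1)) μ0 μ1)

/-- The set of regret values of the rule `δ` over all states, random assignment. -/
def regretSetRA (α r : ℝ) (N : ℕ) (pT : ℝ) (δ : (Fin N → ℝ × ℝ) → ℝ) : Set ℝ :=
  {v | ∃ μ0 μ1 : Measure ℝ, IsProb01 μ0 ∧ IsProb01 μ1 ∧ v = regretRA α r N pT δ μ0 μ1}

namespace Stmt6Aux

open ENNReal Filter Topology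

/-! ### Basic computations with Bernoulli measures -/

lemma Ber_apply (a : ℝ) (s : Set ℝ) :
    Ber a s = ENNReal.ofReal a * s.indicator 1 0 + ENNReal.ofReal (1 - a) * s.indicator 1 1 := by
  simp [Ber, Measure.dirac_apply]

lemma Ber_Icc_left (a : ℝ) {q : ℝ} (h0 : 0 ≤ q) (h1 : q < 1) :
    Ber a (Icc 0 q) = ENNReal.ofReal a := by
  rw [Ber_apply, indicator_of_mem (by simp [h0]) (1 : ℝ → ℝ≥0∞),
    indicator_of_notMem (by simp [h1.not_ge]) (1 : ℝ → ℝ≥0∞)]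
  simp

lemma Ber_Icc_right (a : ℝ) {q : ℝ} (h0 : 0 < q) (h1 : q ≤ 1) :
    Ber a (Icc q 1) = ENNReal.ofReal (1 - a) := by
  rw [Ber_apply, indicator_of_notMem (by simp [h0.not_ge]) (1 : ℝ → ℝ≥0∞),
    indicator_of_mem (by simp [h1]) (1 : ℝ → ℝ≥0∞)]
  simp

lemma Ber_Icc01 {a : ℝ} (h0 : 0 ≤ a) (h1 : a ≤ 1) : Ber a (Icc 0 1) = 1 := by
  rw [Ber_apply, indicator_of_mem (by simp) (1 : ℝ → ℝ≥0∞),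
    indicator_of_mem (by simp) (1 : ℝ → ℝ≥0∞)]
  simp only [Pi.one_apply, mul_one]
  rw [← ENNReal.ofReal_add h0 (by linarith)]
  norm_num

lemma isProb01_Ber {a : ℝ} (h0 : 0 ≤ a) (h1 : a ≤ 1) : IsProb01 (Ber a) := by
  refine ⟨⟨?_⟩, Ber_Icc01 h0 h1⟩
  rw [Ber_apply, indicator_of_mem (mem_univ _) (1 : ℝ → ℝ≥0∞),
    indicator_of_mem (mem_univ _) (1 : ℝ → ℝ≥0∞)]
  simp only [Pi.one_apply, mul_one]
  rw [← ENNReal.ofReal_add h0 (by linarith)]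
  norm_num

/-! ### Quantile computations for Bernoulli measures -/

lemma quantSet_subset (α : ℝ) (μ : Measure ℝ) : quantSet α μ ⊆ Icc 0 1 := fun _ hq => hq.1

lemma quantSet_gt {α a : ℝ} (hα0 : 0 ≤ α) (hlt : α < a) (ha1 : a ≤ 1) :
    quantSet α (Ber a) = {0} := by
  ext q
  simp only [quantSet, mem_setOf_eq, mem_Icc, mem_singleton_iff]
  constructor
  · rintro ⟨⟨hq0, hq1⟩, _, h2⟩
    by_contra hne
    have hq0' : 0 < q := lt_of_le_of_ne hq0 (Ne.symm hne)
    rw [Ber_Icc_right a hq0' hq1, ENNReal.toReal_ofReal (by linarith)] at h2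
    linarith
  · rintro rfl
    refine ⟨⟨le_refl _, zero_le_one⟩, ?_, ?_⟩
    · rw [Ber_Icc_left a (le_refl 0) zero_lt_one, ENNReal.toReal_ofReal (by linarith)]
      exact hlt.le
    · rw [Ber_Icc01 (by linarith) ha1]
      simp; linarith

lemma quant_gt {α r a : ℝ} (hα0 : 0 ≤ α) (hlt : α < a) (ha1 : a ≤ 1) :
    quant α r (Ber a) = 0 := by
  rw [quant, quantSet_gt hα0 hlt ha1, csSup_singleton, csInf_singleton]
  ring

lemma quantSet_lt {α a : ℝ} (hα1 : α ≤ 1) (hlt : a < α) (ha0 : 0 ≤ a) :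
    quantSet α (Ber a) = {1} := by
  ext q
  simp only [quantSet, mem_setOf_eq, mem_Icc, mem_singleton_iff]
  constructor
  · rintro ⟨⟨hq0, hq1⟩, h1, _⟩
    by_contra hne
    have hq1' : q < 1 := lt_of_le_of_ne hq1 hne
    rw [Ber_Icc_left a hq0 hq1', ENNReal.toReal_ofReal ha0] at h1
    linarith
  · rintro rfl
    refine ⟨⟨zero_le_one, le_refl _⟩, ?_, ?_⟩
    · rw [Ber_Icc01 ha0 (by linarith)]; simpa using hα1
    · rw [Ber_Icc_right a zero_lt_one (le_refl 1), ENNReal.toReal_ofReal (by linarith)]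
      linarith

lemma quant_lt {α r a : ℝ} (hα1 : α ≤ 1) (hlt : a < α) (ha0 : 0 ≤ a) :
    quant α r (Ber a) = 1 := by
  rw [quant, quantSet_lt hα1 hlt ha0, csSup_singleton, csInf_singleton]
  ring

lemma quant_self {α : ℝ} (hα0 : 0 ≤ α) (hα1 : α ≤ 1) : quant α 1 (Ber α) = 1 := by
  have hmem : (1 : ℝ) ∈ quantSet α (Ber α) := by
    refine ⟨⟨zero_le_one, le_refl _⟩, ?_, ?_⟩
    · rw [Ber_Icc01 hα0 hα1]; simpa using hα1
    · rw [Ber_Icc_right α zero_lt_one (le_refl 1), ENNReal.toReal_ofReal (by linarith)]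
  have hgr : IsGreatest (quantSet α (Ber α)) 1 := ⟨hmem, fun x hx => hx.1.2⟩
  rw [quant, hgr.csSup_eq]
  ring

lemma quant_mem_Icc {r : ℝ} (hr0 : 0 ≤ r) (hr1 : r ≤ 1) (α : ℝ) (μ : Measure ℝ) :
    quant α r μ ∈ Icc (0 : ℝ) 1 := by
  rcases eq_empty_or_nonempty (quantSet α μ) with he | hne
  · rw [quant, he]
    simp [Real.sSup_empty, Real.sInf_empty]
  · have hbddA : BddAbove (quantSet α μ) := ⟨1, fun x hx => hx.1.2⟩
    have hbddB : BddBelow (quantSet α μ) := ⟨0, fun x hx => hx.1.1⟩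
    obtain ⟨x, hx⟩ := hne
    have hs1 : sSup (quantSet α μ) ≤ 1 := csSup_le ⟨x, hx⟩ fun y hy => hy.1.2
    have hs0 : 0 ≤ sSup (quantSet α μ) := le_trans hx.1.1 (le_csSup hbddA hx)
    have hi1 : sInf (quantSet α μ) ≤ 1 := le_trans (csInf_le hbddB hx) hx.1.2
    have hi0 : 0 ≤ sInf (quantSet α μ) := le_csInf ⟨x, hx⟩ fun y hy => hy.1.1
    constructor
    · rw [quant]; nlinarith
    · rw [quant]; nlinarith

/-! ### The mixture of Bernoulli measures -/

lemma mix_Ber {p a0 a1 : ℝ} (hp0 : 0 ≤ p) (hp1 : p ≤ 1) (h00 : 0 ≤ a0) (h01 : a0 ≤ 1)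
    (h10 : 0 ≤ a1) (h11 : a1 ≤ 1) :
    mix p (Ber a0) (Ber a1) = Ber (p * a1 + (1 - p) * a0) := by
  have c0 : ENNReal.ofReal (p * a1 + (1 - p) * a0)
      = ENNReal.ofReal p * ENNReal.ofReal a1 + ENNReal.ofReal (1 - p) * ENNReal.ofReal a0 := by
    rw [← ENNReal.ofReal_mul hp0, ← ENNReal.ofReal_mul (by linarith),
      ← ENNReal.ofReal_add (mul_nonneg hp0 h10) (mul_nonneg (by linarith) h00)]
  have c1 : ENNReal.ofReal (1 - (p * a1 + (1 - p) * a0))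
      = ENNReal.ofReal p * ENNReal.ofReal (1 - a1)
        + ENNReal.ofReal (1 - p) * ENNReal.ofReal (1 - a0) := by
    rw [← ENNReal.ofReal_mul hp0, ← ENNReal.ofReal_mul (by linarith),
      ← ENNReal.ofReal_add (by nlinarith) (by nlinarith)]
    ring_nf
  rw [mix, Ber, Ber, Ber, c0, c1, smul_add, smul_add, smul_smul, smul_smul, smul_smul,
    smul_smul, add_smul, add_smul]
  abel

/-! ### The observation law as the image of a measure on `Fin 4` -/

/-- The four atoms of the observation law. -/
def emb : Fin 4 → ℝ × ℝ := ![(0, 0), (0, 1), (1, 0), (1, 1)]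

/-- The corresponding weights. -/
def wR (pT a0 a1 : ℝ) : Fin 4 → ℝ :=
  ![(1 - pT) * a0, (1 - pT) * (1 - a0), pT * a1, pT * (1 - a1)]

/-- The observation law transplanted to `Fin 4`. -/
def m4 (pT a0 a1 : ℝ) : Measure (Fin 4) :=
  ∑ i, ENNReal.ofReal (wR pT a0 a1 i) • Measure.dirac i

lemma emb_meas : Measurable emb := measurable_of_countable _

lemma wR_nonneg {pT a0 a1 : ℝ} (hp0 : 0 ≤ pT) (hp1 : pT ≤ 1) (h00 : 0 ≤ a0) (h01 : a0 ≤ 1)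
    (h10 : 0 ≤ a1) (h11 : a1 ≤ 1) (i : Fin 4) : 0 ≤ wR pT a0 a1 i := by
  fin_cases i
  · exact mul_nonneg (by linarith) h00
  · exact mul_nonneg (by linarith) (by linarith)
  · exact mul_nonneg hp0 h10
  · exact mul_nonneg hp0 (by linarith)

lemma wR_sum {pT a0 a1 : ℝ} : ∑ i, wR pT a0 a1 i = 1 := by
  rw [Fin.sum_univ_four]
  simp only [wR]
  norm_num [Matrix.cons_val_zero, Matrix.cons_val_one, Matrix.cons_val_two, Matrix.cons_val_three]
  ring

lemma obs_eq_map {pT a0 a1 : ℝ} (hp0 : 0 ≤ pT) (hp1 : pT ≤ 1) (h00 : 0 ≤ a0) (h01 : a0 ≤ 1)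
    (h10 : 0 ≤ a1) (h11 : a1 ≤ 1) :
    obsLawRA pT (Ber a0) (Ber a1) = (m4 pT a0 a1).map emb := by
  rw [obsLawRA, Ber, Ber, Measure.dirac_prod, Measure.dirac_prod,
    Measure.map_add _ _ measurable_prodMk_left, Measure.map_add _ _ measurable_prodMk_left,
    Measure.map_smul, Measure.map_smul, Measure.map_smul, Measure.map_smul,
    Measure.map_dirac' measurable_prodMk_left, Measure.map_dirac' measurable_prodMk_left,
    Measure.map_dirac' measurable_prodMk_left, Measure.map_dirac' measurable_prodMk_left]
  rw [m4, Fin.sum_univ_four, Measure.map_add _ _ emb_meas, Measure.map_add _ _ emb_meas,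
    Measure.map_add _ _ emb_meas, Measure.map_smul, Measure.map_smul, Measure.map_smul,
    Measure.map_smul, Measure.map_dirac' emb_meas, Measure.map_dirac' emb_meas,
    Measure.map_dirac' emb_meas, Measure.map_dirac' emb_meas]
  simp only [wR, emb, Matrix.cons_val_zero, Matrix.cons_val_one, Matrix.head_cons,
    Matrix.cons_val_two, Matrix.tail_cons, Matrix.cons_val_three]
  rw [ENNReal.ofReal_mul (by linarith), ENNReal.ofReal_mul (by linarith),
    ENNReal.ofReal_mul hp0, ENNReal.ofReal_mul hp0]
  rw [smul_add, smul_add, smul_smul, smul_smul, smul_smul, smul_smul]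
  abel

lemma m4_prob {pT a0 a1 : ℝ} (hp0 : 0 ≤ pT) (hp1 : pT ≤ 1) (h00 : 0 ≤ a0) (h01 : a0 ≤ 1)
    (h10 : 0 ≤ a1) (h11 : a1 ≤ 1) : IsProbabilityMeasure (m4 pT a0 a1) := by
  constructor
  rw [m4, Measure.finset_sum_apply]
  have : ∀ i : Fin 4, (ENNReal.ofReal (wR pT a0 a1 i) • Measure.dirac i) univ
      = ENNReal.ofReal (wR pT a0 a1 i) := by
    intro i; simp
  simp_rw [this]
  rw [← ENNReal.ofReal_sum_of_nonneg (fun i _ => wR_nonneg hp0 hp1 h00 h01 h10 h11 i), wR_sum]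
  exact ENNReal.ofReal_one

lemma m4_singleton {pT a0 a1 : ℝ} (i : Fin 4) :
    m4 pT a0 a1 {i} = ENNReal.ofReal (wR pT a0 a1 i) := by
  rw [m4, Measure.finset_sum_apply]
  simp only [Measure.smul_apply, Measure.dirac_apply, smul_eq_mul]
  rw [Finset.sum_eq_single i]
  · simp
  · intro k _ hk
    simp [indicator_of_notMem, hk]
  · simp

/-- The integral of the rule against the product observation law, as a finite sum. -/
lemma integral_obs {N : ℕ} {pT a0 a1 : ℝ} (hp0 : 0 ≤ pT) (hp1 : pT ≤ 1) (h00 : 0 ≤ a0)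
    (h01 : a0 ≤ 1) (h10 : 0 ≤ a1) (h11 : a1 ≤ 1) (δ : (Fin N → ℝ × ℝ) → ℝ)
    (hδm : Measurable δ) :
    (∫ w, δ w ∂(Measure.pi fun _ : Fin N => obsLawRA pT (Ber a0) (Ber a1)))
      = ∑ g : Fin N → Fin 4, (∏ j, wR pT a0 a1 (g j)) * δ (fun j => emb (g j)) := by
  haveI hm : IsProbabilityMeasure (m4 pT a0 a1) := m4_prob hp0 hp1 h00 h01 h10 h11
  have hobs : obsLawRA pT (Ber a0) (Ber a1) = (m4 pT a0 a1).map emb :=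
    obs_eq_map hp0 hp1 h00 h01 h10 h11
  haveI : IsProbabilityMeasure (obsLawRA pT (Ber a0) (Ber a1)) := by
    rw [hobs]; exact Measure.isProbabilityMeasure_map emb_meas.aemeasurable
  have hMP : MeasurePreserving (fun (g : Fin N → Fin 4) (j : Fin N) => emb (g j))
      (Measure.pi fun _ => m4 pT a0 a1) (Measure.pi fun _ => obsLawRA pT (Ber a0) (Ber a1)) :=
    measurePreserving_pi _ _ (fun _ => ⟨emb_meas, hobs.symm⟩)
  rw [← hMP.map_eq, integral_map hMP.measurable.aemeasurable hδm.aestronglyMeasurable,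
    integral_fintype .of_finite]
  refine Finset.sum_congr rfl fun g _ => ?_
  have hsing : (Measure.pi fun _ : Fin N => m4 pT a0 a1) {g} = ∏ j, m4 pT a0 a1 {g j} := by
    rw [← univ_pi_singleton g, Measure.pi_pi]
  rw [Measure.real, hsing]
  simp_rw [m4_singleton]
  rw [← ENNReal.ofReal_prod_of_nonneg
    (fun j _ => wR_nonneg hp0 hp1 h00 h01 h10 h11 (g j)),
    ENNReal.toReal_ofReal (Finset.prod_nonneg
      (fun j _ => wR_nonneg hp0 hp1 h00 h01 h10 h11 (g j))), smul_eq_mul]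

/-! ### The value of the rule as a polynomial function of the state -/

/-- The probability that the rule selects treatment, as a function of `(a0, a1)`. -/
def Pf (N : ℕ) (pT : ℝ) (δ : (Fin N → ℝ × ℝ) → ℝ) (a0 a1 : ℝ) : ℝ :=
  ∑ g : Fin N → Fin 4, (∏ j, wR pT a0 a1 (g j)) * δ (fun j => emb (g j))

lemma wR_cont (pT : ℝ) (i : Fin 4) : Continuous fun q : ℝ × ℝ => wR pT q.1 q.2 i := by
  fin_cases i
  · show Continuous fun q : ℝ × ℝ => (1 - pT) * q.1
    fun_prop
  · show Continuous fun q : ℝ × ℝ => (1 - pT) * (1 - q.1)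
    fun_prop
  · show Continuous fun q : ℝ × ℝ => pT * q.2
    fun_prop
  · show Continuous fun q : ℝ × ℝ => pT * (1 - q.2)
    fun_prop

lemma Pf_cont (N : ℕ) (pT : ℝ) (δ : (Fin N → ℝ × ℝ) → ℝ) :
    Continuous fun q : ℝ × ℝ => Pf N pT δ q.1 q.2 := by
  unfold Pf
  exact continuous_finset_sum _ fun g _ =>
    (continuous_finset_prod _ fun j _ => wR_cont pT (g j)).mul continuous_const

lemma Pf_mem {N : ℕ} {pT : ℝ} {δ : (Fin N → ℝ × ℝ) → ℝ} (hpT : pT ∈ Ioo (0 : ℝ) 1)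
    (hδ : ∀ w, δ w ∈ Icc (0 : ℝ) 1) {a0 a1 : ℝ} (h0 : a0 ∈ Icc (0 : ℝ) 1)
    (h1 : a1 ∈ Icc (0 : ℝ) 1) : Pf N pT δ a0 a1 ∈ Icc (0 : ℝ) 1 := by
  have hwnn := fun i => wR_nonneg hpT.1.le hpT.2.le h0.1 h0.2 h1.1 h1.2 i
  constructor
  · exact Finset.sum_nonneg fun g _ => mul_nonneg
      (Finset.prod_nonneg fun j _ => hwnn (g j)) (hδ _).1
  · calc Pf N pT δ a0 a1 ≤ ∑ g : Fin N → Fin 4, ∏ j, wR pT a0 a1 (g j) :=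
        Finset.sum_le_sum fun g _ => mul_le_of_le_one_right
          (Finset.prod_nonneg fun j _ => hwnn (g j)) (hδ _).2
    _ = 1 := by
        have := Finset.sum_prod_piFinset (Finset.univ : Finset (Fin 4))
          (fun (_ : Fin N) (k : Fin 4) => wR pT a0 a1 k)
        rw [Fintype.piFinset_univ] at this
        rw [this, wR_sum, Finset.prod_const_one]

lemma regret_Ber {α r : ℝ} {N : ℕ} {pT : ℝ} {δ : (Fin N → ℝ × ℝ) → ℝ}
    (hpT : pT ∈ Ioo (0 : ℝ) 1) (hδm : Measurable δ) (hδ : ∀ w, δ w ∈ Icc (0 : ℝ) 1)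
    {a0 a1 : ℝ} (h0 : a0 ∈ Icc (0 : ℝ) 1) (h1 : a1 ∈ Icc (0 : ℝ) 1) :
    regretRA α r N pT δ (Ber a0) (Ber a1)
      = max (quant α r (Ber a0)) (quant α r (Ber a1))
        - quant α r (Ber (Pf N pT δ a0 a1 * a1 + (1 - Pf N pT δ a0 a1) * a0)) := by
  have hi : (∫ w, δ w ∂(Measure.pi fun _ : Fin N => obsLawRA pT (Ber a0) (Ber a1)))
      = Pf N pT δ a0 a1 :=
    integral_obs hpT.1.le hpT.2.le h0.1 h0.2 h1.1 h1.2 δ hδm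
  have hp := Pf_mem hpT hδ h0 h1
  rw [regretRA, hi, mix_Ber hp.1 hp.2 h0.1 h0.2 h1.1 h1.2]

/-! ### The main existence lemma -/

set_option maxHeartbeats 1000000 in

lemma exists_regret_one (α r : ℝ) (hα0 : 0 ≤ α) (hα1 : α < 1) (hr0 : 0 ≤ r) (hr1 : r ≤ 1)
    (hcase : 0 < α ∨ r = 1)
    (N : ℕ) (pT : ℝ) (hpT : pT ∈ Ioo (0 : ℝ) 1)
    (δ : (Fin N → ℝ × ℝ) → ℝ) (hδm : Measurable δ) (hδ : ∀ w, δ w ∈ Icc (0 : ℝ) 1) :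
    ∃ a0 ∈ Icc (0 : ℝ) 1, ∃ a1 ∈ Icc (0 : ℝ) 1,
      regretRA α r N pT δ (Ber a0) (Ber a1) = 1 := by
  by_contra hcon
  push_neg at hcon
  set P : ℝ → ℝ → ℝ := Pf N pT δ with hPdef
  have hPcont : Continuous fun q : ℝ × ℝ => P q.1 q.2 := Pf_cont N pT δ
  have hP01 : ∀ a0 ∈ Icc (0 : ℝ) 1, ∀ a1 ∈ Icc (0 : ℝ) 1, P a0 a1 ∈ Icc (0 : ℝ) 1 :=
    fun a0 h0 a1 h1 => Pf_mem hpT hδ h0 h1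
  have hreg : ∀ a0 ∈ Icc (0 : ℝ) 1, ∀ a1 ∈ Icc (0 : ℝ) 1,
      regretRA α r N pT δ (Ber a0) (Ber a1)
        = max (quant α r (Ber a0)) (quant α r (Ber a1))
          - quant α r (Ber (P a0 a1 * a1 + (1 - P a0 a1) * a0)) :=
    fun a0 h0 a1 h1 => regret_Ber hpT hδm hδ h0 h1
  -- the key step: no state of regret 1 forces the mixture mass to stay ≤ α
  have hK : ∀ a0 ∈ Icc (0 : ℝ) 1, ∀ a1 ∈ Icc (0 : ℝ) 1,
      max (quant α r (Ber a0)) (quant α r (Ber a1)) = 1 →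
      P a0 a1 * a1 + (1 - P a0 a1) * a0 ≤ α := by
    intro a0 h0 a1 h1 hmax
    by_contra hgt
    push_neg at hgt
    have hp := hP01 a0 h0 a1 h1
    have hm1 : P a0 a1 * a1 + (1 - P a0 a1) * a0 ≤ 1 := by nlinarith [hp.1, hp.2, h0.1, h0.2, h1.1, h1.2]
    have hz := hcon a0 h0 a1 h1
    rw [hreg a0 h0 a1 h1, hmax, quant_gt hα0 hgt hm1] at hz
    simp at hz
  -- Step A : P α β = 0 for β ∈ (α, 1]
  have hA : ∀ β, α < β → β ≤ 1 → P α β = 0 := by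
    intro β hβ hβ1
    have hβm : β ∈ Icc (0 : ℝ) 1 := ⟨le_trans hα0 hβ.le, hβ1⟩
    have hαm : α ∈ Icc (0 : ℝ) 1 := ⟨hα0, hα1.le⟩
    have hq1 : quant α r (Ber β) = 0 := quant_gt hα0 hβ hβ1
    have hPnn := (hP01 α hαm β hβm).1
    rcases hcase with hαpos | hr
    · -- limit in d
      have key : ∀ d ∈ Ioo (0 : ℝ) α, P (α - d) β ≤ d / (β - α + d) := by
        intro d hd
        have hd0 := hd.1
        have hdα := hd.2
        have ha0m : α - d ∈ Icc (0 : ℝ) 1 := ⟨by linarith, by linarith⟩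
        have hq0 : quant α r (Ber (α - d)) = 1 := quant_lt hα1.le (by linarith) (by linarith)
        have hmax : max (quant α r (Ber (α - d))) (quant α r (Ber β)) = 1 := by
          rw [hq0, hq1]; norm_num
        have hKd := hK (α - d) ha0m β hβm hmax
        have hden : 0 < β - α + d := by linarith
        rw [le_div_iff₀ hden]
        nlinarith [hKd]
      have t1 : Tendsto (fun d : ℝ => P (α - d) β) (𝓝[>] (0:ℝ)) (𝓝 (P α β)) := by
        have hc : Continuous fun d : ℝ => P (α - d) β := by
          have : Continuous fun d : ℝ => ((α - d, β) : ℝ × ℝ) := by fun_prop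
          exact hPcont.comp this
        simpa using (hc.tendsto 0).mono_left nhdsWithin_le_nhds
      have t2 : Tendsto (fun d : ℝ => d / (β - α + d)) (𝓝[>] (0:ℝ)) (𝓝 0) := by
        have hne : β - α + (0:ℝ) ≠ 0 := by simp; linarith
        have hc : ContinuousAt (fun d : ℝ => d / (β - α + d)) 0 :=
          continuousAt_id.div (by fun_prop) hne
        have := hc.tendsto.mono_left (nhdsWithin_le_nhds (s := Ioi (0:ℝ)))
        simpa using this
      have hev : ∀ᶠ d in 𝓝[>] (0:ℝ), P (α - d) β ≤ d / (β - α + d) :=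
        eventually_of_mem (Ioo_mem_nhdsGT_of_mem ⟨le_refl 0, hαpos⟩) key
      have hle : P α β ≤ 0 := le_of_tendsto_of_tendsto t1 t2 hev
      linarith
    · -- r = 1, use a0 = α directly
      have hq0 : quant α r (Ber α) = 1 := by rw [hr]; exact quant_self hα0 hα1.le
      have hmax : max (quant α r (Ber α)) (quant α r (Ber β)) = 1 := by
        rw [hq0, hq1]; norm_num
      have hKd := hK α hαm β hβm hmax
      nlinarith [hKd, hPnn]
  -- Step B : P β α = 1 for β ∈ (α, 1]
  have hB : ∀ β, α < β → β ≤ 1 → P β α = 1 := by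
    intro β hβ hβ1
    have hβm : β ∈ Icc (0 : ℝ) 1 := ⟨le_trans hα0 hβ.le, hβ1⟩
    have hαm : α ∈ Icc (0 : ℝ) 1 := ⟨hα0, hα1.le⟩
    have hq0 : quant α r (Ber β) = 0 := quant_gt hα0 hβ hβ1
    have hPle := (hP01 β hβm α hαm).2
    rcases hcase with hαpos | hr
    · have key : ∀ d ∈ Ioo (0 : ℝ) α, (β - α) / (β - α + d) ≤ P β (α - d) := by
        intro d hd
        have hd0 := hd.1
        have hdα := hd.2
        have ha1m : α - d ∈ Icc (0 : ℝ) 1 := ⟨by linarith, by linarith⟩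
        have hq1 : quant α r (Ber (α - d)) = 1 := quant_lt hα1.le (by linarith) (by linarith)
        have hmax : max (quant α r (Ber β)) (quant α r (Ber (α - d))) = 1 := by
          rw [hq0, hq1]; norm_num
        have hKd := hK β hβm (α - d) ha1m hmax
        have hden : 0 < β - α + d := by linarith
        rw [div_le_iff₀ hden]
        nlinarith [hKd]
      have t1 : Tendsto (fun d : ℝ => P β (α - d)) (𝓝[>] (0:ℝ)) (𝓝 (P β α)) := by
        have hc : Continuous fun d : ℝ => P β (α - d) := by
          have : Continuous fun d : ℝ => ((β, α - d) : ℝ × ℝ) := by fun_prop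
          exact hPcont.comp this
        simpa using (hc.tendsto 0).mono_left nhdsWithin_le_nhds
      have t2 : Tendsto (fun d : ℝ => (β - α) / (β - α + d)) (𝓝[>] (0:ℝ)) (𝓝 1) := by
        have hne : β - α + (0:ℝ) ≠ 0 := by simp; linarith
        have hc : ContinuousAt (fun d : ℝ => (β - α) / (β - α + d)) 0 :=
          continuousAt_const.div (by fun_prop) hne
        have := hc.tendsto.mono_left (nhdsWithin_le_nhds (s := Ioi (0:ℝ)))
        have hne2 : β - α ≠ 0 := ne_of_gt (by linarith)
        simpa [div_self hne2] using this
      have hev : ∀ᶠ d in 𝓝[>] (0:ℝ), (β - α) / (β - α + d) ≤ P β (α - d) :=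
        eventually_of_mem (Ioo_mem_nhdsGT_of_mem ⟨le_refl 0, hαpos⟩) key
      have hge : 1 ≤ P β α := le_of_tendsto_of_tendsto t2 t1 hev
      linarith
    · have hq1 : quant α r (Ber α) = 1 := by rw [hr]; exact quant_self hα0 hα1.le
      have hmax : max (quant α r (Ber β)) (quant α r (Ber α)) = 1 := by
        rw [hq0, hq1]; norm_num
      have hKd := hK β hβm α hαm hmax
      nlinarith [hKd, hPle]
  -- limits β → α⁺ give a contradiction
  have hmemIoo : Ioo α 1 ∈ 𝓝[>] α := Ioo_mem_nhdsGT_of_mem ⟨le_refl α, hα1⟩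
  have hcA : Tendsto (fun β => P α β) (𝓝[>] α) (𝓝 (P α α)) := by
    have hc : Continuous fun β : ℝ => P α β := by
      have : Continuous fun β : ℝ => ((α, β) : ℝ × ℝ) := by fun_prop
      exact hPcont.comp this
    exact (hc.tendsto α).mono_left nhdsWithin_le_nhds
  have hcB : Tendsto (fun β => P β α) (𝓝[>] α) (𝓝 (P α α)) := by
    have hc : Continuous fun β : ℝ => P β α := by
      have : Continuous fun β : ℝ => ((β, α) : ℝ × ℝ) := by fun_prop
      exact hPcont.comp this
    exact (hc.tendsto α).mono_left nhdsWithin_le_nhds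
  have hzA : Tendsto (fun β => P α β) (𝓝[>] α) (𝓝 0) := by
    refine Tendsto.congr' ?_ tendsto_const_nhds
    filter_upwards [hmemIoo] with β hβ
    exact (hA β hβ.1 hβ.2.le).symm
  have hzB : Tendsto (fun β => P β α) (𝓝[>] α) (𝓝 1) := by
    refine Tendsto.congr' ?_ tendsto_const_nhds
    filter_upwards [hmemIoo] with β hβ
    exact (hB β hβ.1 hβ.2.le).symm
  have h0 : P α α = 0 := tendsto_nhds_unique hcA hzA
  have h1 : P α α = 1 := tendsto_nhds_unique hcB hzB
  rw [h0] at h1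
  norm_num at h1

/-- Regret is always at most 1 (for any state). -/
lemma regret_le_one {α r : ℝ} (hr0 : 0 ≤ r) (hr1 : r ≤ 1) (N : ℕ) (pT : ℝ)
    (δ : (Fin N → ℝ × ℝ) → ℝ) (μ0 μ1 : Measure ℝ) :
    regretRA α r N pT δ μ0 μ1 ≤ 1 := by
  have h0 := quant_mem_Icc hr0 hr1 α μ0
  have h1 := quant_mem_Icc hr0 hr1 α μ1
  have hν := quant_mem_Icc hr0 hr1 α
    (mix (∫ w, δ w ∂(Measure.pi fun _ : Fin N => obsLawRA pT μ0 μ1)) μ0 μ1)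
  rw [regretRA]
  have : max (quant α r μ0) (quant α r μ1) ≤ 1 := max_le h0.2 h1.2
  linarith [hν.1]

end Stmt6Aux

open Stmt6Aux in
/-- random assignment, `(α ∈ (0,1), r ∈ [0,1])` or `(α = 0, r = 1)`: for every
rule there is a Bernoulli state with regret 1; hence the supremum of regret over states equals
1, is attained, and every rule is minimax regret. -/
theorem stmt6 (α r : ℝ)
    (h : (α ∈ Ioo (0 : ℝ) 1 ∧ r ∈ Icc (0 : ℝ) 1) ∨ (α = 0 ∧ r = 1))
    (N : ℕ) (pT : ℝ) (hpT : pT ∈ Ioo (0 : ℝ) 1)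
    (δ : (Fin N → ℝ × ℝ) → ℝ) (hδm : Measurable δ)
    (hδ : ∀ w, δ w ∈ Icc (0 : ℝ) 1) :
    (∃ a0 ∈ Icc (0 : ℝ) 1, ∃ a1 ∈ Icc (0 : ℝ) 1,
        regretRA α r N pT δ (Ber a0) (Ber a1) = 1) ∧
    IsGreatest (regretSetRA α r N pT δ) 1 ∧
    (∀ δ' : (Fin N → ℝ × ℝ) → ℝ, Measurable δ' → (∀ w, δ' w ∈ Icc (0 : ℝ) 1) →
      sSup (regretSetRA α r N pT δ) ≤ sSup (regretSetRA α r N pT δ')) := by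
  have hbase : 0 ≤ α ∧ α < 1 ∧ 0 ≤ r ∧ r ≤ 1 ∧ (0 < α ∨ r = 1) := by
    rcases h with ⟨⟨h1, h2⟩, h3, h4⟩ | ⟨h1, h2⟩
    · exact ⟨h1.le, h2, h3, h4, Or.inl h1⟩
    · subst h1; subst h2; norm_num
  obtain ⟨hα0, hα1, hr0, hr1, hcase⟩ := hbase
  have hgr : ∀ δ'' : (Fin N → ℝ × ℝ) → ℝ, Measurable δ'' → (∀ w, δ'' w ∈ Icc (0 : ℝ) 1) →
      IsGreatest (regretSetRA α r N pT δ'') 1 := by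
    intro δ'' hm'' hb''
    obtain ⟨a0, ha0, a1, ha1, hreg⟩ :=
      exists_regret_one α r hα0 hα1 hr0 hr1 hcase N pT hpT δ'' hm'' hb''
    constructor
    · exact ⟨Ber a0, Ber a1, isProb01_Ber ha0.1 ha0.2, isProb01_Ber ha1.1 ha1.2, hreg.symm⟩
    · rintro v ⟨μ0, μ1, _, _, rfl⟩
      exact regret_le_one hr0 hr1 N pT δ'' μ0 μ1
  refine ⟨?_, hgr δ hδm hδ, ?_⟩
  · exact exists_regret_one α r hα0 hα1 hr0 hr1 hcase N pT hpT δ hδm hδ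
  · intro δ' hm' hb'
    rw [(hgr δ hδm hδ).csSup_eq,
      (hgr δ' hm' hb').csSup_eq]
end
end

section
/- Testing-an-innovation setup; assume (α ∈ (0,1) and r ∈ [0,1]) or (α = 0 and r = 1), and assume q0 > 1/2. Then the constant rule δ⁰ ≡ 0 satisfies sup over states of R(δ⁰,·) = 1 − q0 and this supremum is attained; and every treatment rule δ that is not identically 0 (i.e., δ(w̃) > 0 for some w̃ ∈ [0,1]^N) satisfies sup over states of R(δ,·) ≥ q0 > 1 − q0. Hence δ⁰ is the unique minimax regret rule. -/
open MeasureTheory Set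

noncomputable section

/-- Law of the sample in the testing-an-innovation design: `N` i.i.d. draws from `μ1`. -/
def sampleLawTI (N : ℕ) (μ1 : Measure ℝ) : Measure (Fin N → ℝ) :=
  Measure.pi fun _ => μ1

/-- Regret of a treatment rule in the testing-an-innovation design, with known
`α`-quantile `q0` of the control distribution `μ0`. -/
def regretTI (α r : ℝ) (N : ℕ) (q0 : ℝ) (δ : (Fin N → ℝ) → ℝ)
    (μ0 μ1 : Measure ℝ) : ℝ :=
  max q0 (quant α r μ1) -
    quant α r (mix (∫ w, δ w ∂(sampleLawTI N μ1)) μ0 μ1)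

/-- The set of regret values of the rule `δ` over all states with `q_{α,r}(μ0) = q0`. -/
def regretSetTI (α r : ℝ) (N : ℕ) (q0 : ℝ) (δ : (Fin N → ℝ) → ℝ) : Set ℝ :=
  {v | ∃ μ0 μ1 : Measure ℝ, IsProb01 μ0 ∧ IsProb01 μ1 ∧ quant α r μ0 = q0 ∧
      v = regretTI α r N q0 δ μ0 μ1}

namespace Stmt8Aux

/-! ### Basic facts about `quant` -/

lemma h_r {α r : ℝ} (h : (α ∈ Ioo (0:ℝ) 1 ∧ r ∈ Icc (0:ℝ) 1) ∨ (α = 0 ∧ r = 1)) :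
    0 ≤ r ∧ r ≤ 1 := by
  rcases h with ⟨_, hr⟩ | ⟨_, hr⟩
  · exact ⟨hr.1, hr.2⟩
  · simp [hr]

lemma h_alpha {α r : ℝ} (h : (α ∈ Ioo (0:ℝ) 1 ∧ r ∈ Icc (0:ℝ) 1) ∨ (α = 0 ∧ r = 1)) :
    0 ≤ α ∧ α < 1 := by
  rcases h with ⟨hα, _⟩ | ⟨hα, _⟩
  · exact ⟨hα.1.le, hα.2⟩
  · simp [hα]

lemma quant_mem_Icc {r : ℝ} (hr0 : 0 ≤ r) (hr1 : r ≤ 1) (α : ℝ) (μ : Measure ℝ) :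
    quant α r μ ∈ Icc (0:ℝ) 1 := by
  by_cases hne : (quantSet α μ).Nonempty
  · have hbddA : BddAbove (quantSet α μ) := ⟨1, fun x hx => hx.1.2⟩
    have hbddB : BddBelow (quantSet α μ) := ⟨0, fun x hx => hx.1.1⟩
    have hS1 : sSup (quantSet α μ) ≤ 1 := csSup_le hne (fun x hx => hx.1.2)
    have hI0 : 0 ≤ sInf (quantSet α μ) := le_csInf hne (fun x hx => hx.1.1)
    have hIS : sInf (quantSet α μ) ≤ sSup (quantSet α μ) := csInf_le_csSup hne hbddB hbddA
    constructor <;> simp only [quant] <;> nlinarith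
  · rw [not_nonempty_iff_eq_empty] at hne
    rw [mem_Icc]
    simp [quant, hne, Real.sSup_empty, Real.sInf_empty]

lemma quant_of_singleton {α r c : ℝ} {μ : Measure ℝ} (hqs : quantSet α μ = {c}) :
    quant α r μ = c := by
  rw [quant, hqs, csSup_singleton, csInf_singleton]; ring

lemma measure_pair_le (ν : Measure ℝ) (hν1 : ν (Icc 0 1) = 1) {A B : Set ℝ}
    (hd : Disjoint A B) (hmB : MeasurableSet B) (hsub : A ∪ B ⊆ Icc 0 1) :
    (ν A).toReal + (ν B).toReal ≤ 1 := by
  have hsum : ν A + ν B ≤ 1 := by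
    rw [← measure_union hd hmB, ← hν1]
    exact measure_mono hsub
  have hA : ν A ≠ ⊤ := ne_top_of_le_ne_top ENNReal.one_ne_top (le_trans le_self_add hsum)
  have hB : ν B ≠ ⊤ := ne_top_of_le_ne_top ENNReal.one_ne_top (le_trans le_add_self hsum)
  have := ENNReal.toReal_mono ENNReal.one_ne_top hsum
  rw [ENNReal.toReal_add hA hB] at this
  simpa using this

/-- If the mass of `ν` at `0` exceeds `α`, the `(α,r)`-quantile of `ν` is `0`. -/
lemma quant_eq_zero {α r : ℝ} (h : (α ∈ Ioo (0:ℝ) 1 ∧ r ∈ Icc (0:ℝ) 1) ∨ (α = 0 ∧ r = 1))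
    (ν : Measure ℝ) (hν1 : ν (Icc 0 1) = 1) (h0 : α < (ν {0}).toReal) :
    quant α r ν = 0 := by
  obtain ⟨hα0, hα1⟩ := h_alpha h
  apply quant_of_singleton (c := 0)
  ext q
  simp only [quantSet, mem_setOf_eq, mem_singleton_iff, mem_Icc]
  constructor
  · rintro ⟨⟨hq0, hq1⟩, _, h2⟩
    by_contra hne
    have hqpos : 0 < q := lt_of_le_of_ne hq0 (Ne.symm hne)
    have hkey : (ν {0}).toReal + (ν (Icc q 1)).toReal ≤ 1 := by
      apply measure_pair_le ν hν1 _ measurableSet_Icc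
      · rintro x (hx | hx)
        · rw [mem_singleton_iff] at hx; subst hx; exact ⟨le_refl 0, zero_le_one⟩
        · exact ⟨le_trans hqpos.le hx.1, hx.2⟩
      · rw [Set.disjoint_singleton_left, mem_Icc]
        intro hc; linarith [hc.1]
    linarith
  · rintro rfl
    refine ⟨⟨le_refl 0, zero_le_one⟩, ?_, ?_⟩
    · rw [Icc_self]; exact h0.le
    · rw [hν1]; simp; linarith

/-- If the mass of `ν` at `1` is large, the `(α,r)`-quantile of `ν` is `1`. -/
lemma quant_eq_one {α r : ℝ} (h : (α ∈ Ioo (0:ℝ) 1 ∧ r ∈ Icc (0:ℝ) 1) ∨ (α = 0 ∧ r = 1))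
    (ν : Measure ℝ) (hν1 : ν (Icc 0 1) = 1)
    (h1 : 1 - α < (ν {1}).toReal ∨ (α = 0 ∧ 1 ≤ (ν {1}).toReal)) :
    quant α r ν = 1 := by
  rcases h with ⟨⟨hα0, hα1⟩, _, _⟩ | ⟨hα, hr⟩
  · -- α ∈ (0,1)
    have h1' : 1 - α < (ν {1}).toReal := by
      rcases h1 with h1 | ⟨h1, _⟩
      · exact h1
      · exact absurd h1 (by linarith)
    apply quant_of_singleton (c := 1)
    ext q
    simp only [quantSet, mem_setOf_eq, mem_singleton_iff, mem_Icc]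
    constructor
    · rintro ⟨⟨hq0, hq1⟩, hc1, _⟩
      by_contra hne
      have hqlt : q < 1 := lt_of_le_of_ne hq1 hne
      have hkey : (ν (Icc 0 q)).toReal + (ν {1}).toReal ≤ 1 := by
        apply measure_pair_le ν hν1 _ (measurableSet_singleton 1)
        · rintro x (hx | hx)
          · exact ⟨hx.1, le_trans hx.2 hq1⟩
          · rw [mem_singleton_iff] at hx; subst hx; exact ⟨zero_le_one, le_refl 1⟩
        · rw [Set.disjoint_singleton_right, mem_Icc]
          intro hc; linarith [hc.2]
      linarith
    · rintro rfl
      refine ⟨⟨zero_le_one, le_refl 1⟩, ?_, ?_⟩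
      · rw [hν1]; simp; linarith
      · rw [Icc_self]; linarith
  · -- α = 0, r = 1
    subst hα; subst hr
    have h1' : 1 ≤ (ν {1}).toReal := by
      rcases h1 with h1 | ⟨_, h1⟩
      · linarith
      · exact h1
    have hqs : quantSet 0 ν = Icc 0 1 := by
      ext q
      simp only [quantSet, mem_setOf_eq, mem_Icc]
      constructor
      · rintro ⟨hq, _, _⟩; exact hq
      · rintro ⟨hq0, hq1⟩
        refine ⟨⟨hq0, hq1⟩, by positivity, ?_⟩
        have hsub : ({1} : Set ℝ) ⊆ Icc q 1 := by
          rw [singleton_subset_iff, mem_Icc]; exact ⟨hq1, le_refl 1⟩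
        have hfin : ν (Icc q 1) ≠ ⊤ := by
          apply ne_top_of_le_ne_top ENNReal.one_ne_top
          rw [← hν1]
          exact measure_mono (fun x hx => ⟨le_trans hq0 hx.1, hx.2⟩)
        have := ENNReal.toReal_mono hfin (measure_mono hsub)
        linarith
    rw [quant, hqs, csSup_Icc zero_le_one, csInf_Icc zero_le_one]
    ring

end Stmt8Aux
namespace Stmt8Aux

/-! ### Two-point measures -/

/-- Two-point measure: mass `β` at `x` and `1-β` at `y`. -/
def tp (β x y : ℝ) : Measure ℝ :=
  ENNReal.ofReal β • Measure.dirac x + ENNReal.ofReal (1-β) • Measure.dirac y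

lemma Ber_eq_tp (a : ℝ) : Ber a = tp a 0 1 := rfl

lemma tp_apply (β x y : ℝ) (E : Set ℝ) :
    tp β x y E = ENNReal.ofReal β * E.indicator 1 x + ENNReal.ofReal (1-β) * E.indicator 1 y := by
  simp [tp, Measure.add_apply, Measure.smul_apply, smul_eq_mul, Measure.dirac_apply]

lemma tp_eq_one {β : ℝ} (hβ0 : 0 ≤ β) (hβ1 : β ≤ 1) {x y : ℝ} {E : Set ℝ}
    (hx : x ∈ E) (hy : y ∈ E) : tp β x y E = 1 := by
  rw [tp_apply, Set.indicator_of_mem hx, Set.indicator_of_mem hy]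
  simp only [Pi.one_apply, mul_one]
  rw [← ENNReal.ofReal_add hβ0 (by linarith)]
  norm_num

lemma tp_toReal_both {β : ℝ} (hβ0 : 0 ≤ β) (hβ1 : β ≤ 1) {x y : ℝ} {E : Set ℝ}
    (hx : x ∈ E) (hy : y ∈ E) : (tp β x y E).toReal = 1 := by
  rw [tp_eq_one hβ0 hβ1 hx hy]; simp

lemma tp_toReal_left {β : ℝ} (hβ0 : 0 ≤ β) {x y : ℝ} {E : Set ℝ}
    (hx : x ∈ E) (hy : y ∉ E) : (tp β x y E).toReal = β := by
  rw [tp_apply, Set.indicator_of_mem hx, Set.indicator_of_notMem hy, Pi.one_apply,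
    mul_one, mul_zero, add_zero, ENNReal.toReal_ofReal hβ0]

lemma tp_toReal_right {β : ℝ} (hβ1 : β ≤ 1) {x y : ℝ} {E : Set ℝ}
    (hx : x ∉ E) (hy : y ∈ E) : (tp β x y E).toReal = 1 - β := by
  rw [tp_apply, Set.indicator_of_notMem hx, Set.indicator_of_mem hy, Pi.one_apply,
    mul_one, mul_zero, zero_add, ENNReal.toReal_ofReal (by linarith)]

lemma tp_toReal_none {β x y : ℝ} {E : Set ℝ}
    (hx : x ∉ E) (hy : y ∉ E) : (tp β x y E).toReal = 0 := by
  rw [tp_apply, Set.indicator_of_notMem hx, Set.indicator_of_notMem hy]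
  simp

lemma tp_isProb01 {β x y : ℝ} (hβ0 : 0 ≤ β) (hβ1 : β ≤ 1)
    (hx : x ∈ Icc (0:ℝ) 1) (hy : y ∈ Icc (0:ℝ) 1) : IsProb01 (tp β x y) := by
  constructor
  · constructor
    rw [show (univ : Set ℝ) = univ from rfl]
    exact tp_eq_one hβ0 hβ1 (mem_univ x) (mem_univ y)
  · exact tp_eq_one hβ0 hβ1 hx hy

/-- The control measure `tp β 0 q0` has `(α,r)`-quantile `q0`. -/
lemma quant_tp_eq {α r q0 β : ℝ}
    (h : (α ∈ Ioo (0:ℝ) 1 ∧ r ∈ Icc (0:ℝ) 1) ∨ (α = 0 ∧ r = 1))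
    (hq01 : q0 ∈ Icc (0:ℝ) 1) (hq : 1/2 < q0)
    (hβ0 : 0 ≤ β) (hβcase : β < α ∨ β = 0) :
    quant α r (tp β 0 q0) = q0 := by
  obtain ⟨hq00, hq01'⟩ := hq01
  rcases h with ⟨⟨hα0, hα1⟩, _, _⟩ | ⟨hα, hr⟩
  · -- α ∈ (0,1)
    have hβα : β < α := by
      rcases hβcase with h' | h'
      · exact h'
      · rw [h']; exact hα0
    have hβ1 : β ≤ 1 := by linarith
    apply quant_of_singleton (c := q0)
    ext q
    simp only [quantSet, mem_setOf_eq, mem_singleton_iff, mem_Icc]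
    constructor
    · rintro ⟨⟨hq0, hq1⟩, hc1, hc2⟩
      rcases lt_trichotomy q q0 with hlt | heq | hgt
      · exfalso
        rw [tp_toReal_left hβ0 (by rw [mem_Icc]; exact ⟨le_refl 0, hq0⟩)
          (by rw [mem_Icc]; intro hc; linarith [hc.2])] at hc1
        linarith
      · exact heq
      · exfalso
        rw [tp_toReal_none (by rw [mem_Icc]; intro hc; linarith [hc.1])
          (by rw [mem_Icc]; intro hc; linarith [hc.1])] at hc2
        linarith
    · rintro rfl
      refine ⟨⟨hq00, hq01'⟩, ?_, ?_⟩
      · rw [tp_toReal_both hβ0 hβ1 (by rw [mem_Icc]; exact ⟨le_refl 0, hq00⟩)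
          (by rw [mem_Icc]; exact ⟨hq00, le_refl _⟩)]
        linarith
      · rw [tp_toReal_right hβ1 (by rw [mem_Icc]; intro hc; linarith [hc.1])
          (by rw [mem_Icc]; exact ⟨le_refl _, hq01'⟩)]
        linarith
  · -- α = 0, r = 1
    have hβz : β = 0 := by
      rcases hβcase with h' | h'
      · exfalso; rw [hα] at h'; linarith
      · exact h'
    subst hα; subst hr; subst hβz
    have hqs : quantSet 0 (tp 0 0 q0) = Icc 0 q0 := by
      ext q
      simp only [quantSet, mem_setOf_eq, mem_Icc]
      constructor
      · rintro ⟨⟨hq0, hq1⟩, _, hc2⟩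
        refine ⟨hq0, ?_⟩
        by_contra hgt
        push_neg at hgt
        rw [tp_toReal_none (by rw [mem_Icc]; intro hc; linarith [hc.1])
          (by rw [mem_Icc]; intro hc; linarith [hc.1])] at hc2
        linarith
      · rintro ⟨hq0, hq1⟩
        have hval : (tp 0 0 q0 (Icc q 1)).toReal = 1 := by
          by_cases h0m : (0:ℝ) ∈ Icc q 1
          · exact tp_toReal_both le_rfl zero_le_one h0m
              (by rw [mem_Icc]; exact ⟨hq1, hq01'⟩)
          · rw [tp_toReal_right zero_le_one h0m (by rw [mem_Icc]; exact ⟨hq1, hq01'⟩)]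
            ring
        refine ⟨⟨hq0, le_trans hq1 hq01'⟩, by positivity, ?_⟩
        rw [hval]; linarith
    rw [quant, hqs, csSup_Icc (by linarith : (0:ℝ) ≤ q0), csInf_Icc (by linarith : (0:ℝ) ≤ q0)]
    ring

end Stmt8Aux
namespace Stmt8Aux

/-! ### Bounding quantiles of the mixture, and integral facts -/

lemma quant_le_of {α r q0 : ℝ}
    (h : (α ∈ Ioo (0:ℝ) 1 ∧ r ∈ Icc (0:ℝ) 1) ∨ (α = 0 ∧ r = 1))
    (hq00 : 0 ≤ q0) (ν : Measure ℝ)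
    (hub : ∀ q, q0 < q → q ≤ 1 → ¬ (1 - α ≤ (ν (Icc q 1)).toReal)) :
    quant α r ν ≤ q0 := by
  obtain ⟨hr0, hr1⟩ := h_r h
  have hsub : quantSet α ν ⊆ Icc 0 q0 := by
    rintro q ⟨⟨h0, h1⟩, _, h2⟩
    refine ⟨h0, ?_⟩
    by_contra hgt
    push_neg at hgt
    exact hub q hgt h1 h2
  by_cases hne : (quantSet α ν).Nonempty
  · have hbddA : BddAbove (quantSet α ν) := ⟨1, fun x hx => hx.1.2⟩
    have hbddB : BddBelow (quantSet α ν) := ⟨0, fun x hx => hx.1.1⟩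
    have hS : sSup (quantSet α ν) ≤ q0 := csSup_le hne (fun x hx => (hsub hx).2)
    have hI0 : 0 ≤ sInf (quantSet α ν) := le_csInf hne (fun x hx => hx.1.1)
    have hIS : sInf (quantSet α ν) ≤ sSup (quantSet α ν) := csInf_le_csSup hne hbddB hbddA
    simp only [quant]
    nlinarith
  · rw [not_nonempty_iff_eq_empty] at hne
    simp [quant, hne, Real.sSup_empty, Real.sInf_empty, hq00]

lemma mix_apply_toReal {p : ℝ} (hp0 : 0 ≤ p) (hp1 : p ≤ 1) (μ0 μ1 : Measure ℝ) (E : Set ℝ)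
    (h0 : μ0 E ≠ ⊤) (h1 : μ1 E ≠ ⊤) :
    (mix p μ0 μ1 E).toReal = p * (μ1 E).toReal + (1-p) * (μ0 E).toReal := by
  rw [mix, Measure.add_apply, Measure.smul_apply, Measure.smul_apply, smul_eq_mul, smul_eq_mul,
    ENNReal.toReal_add (ENNReal.mul_ne_top ENNReal.ofReal_ne_top h1)
      (ENNReal.mul_ne_top ENNReal.ofReal_ne_top h0),
    ENNReal.toReal_mul, ENNReal.toReal_mul, ENNReal.toReal_ofReal hp0,
    ENNReal.toReal_ofReal (by linarith)]

lemma mix_icc {p : ℝ} (hp0 : 0 ≤ p) (hp1 : p ≤ 1) {μ0 μ1 : Measure ℝ}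
    (hμ0 : μ0 (Icc 0 1) = 1) (hμ1 : μ1 (Icc 0 1) = 1) :
    mix p μ0 μ1 (Icc 0 1) = 1 := by
  rw [mix, Measure.add_apply, Measure.smul_apply, Measure.smul_apply, smul_eq_mul, smul_eq_mul,
    hμ0, hμ1, mul_one, mul_one, ← ENNReal.ofReal_add hp0 (by linarith)]
  norm_num

lemma mix_zero (μ0 μ1 : Measure ℝ) : mix 0 μ0 μ1 = μ0 := by
  rw [mix]
  simp

lemma integrable_of_range {N : ℕ} {μ : Measure (Fin N → ℝ)} [IsFiniteMeasure μ]
    {δ : (Fin N → ℝ) → ℝ} (hmeas : Measurable δ) (hrange : ∀ w, δ w ∈ Icc (0:ℝ) 1) :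
    Integrable δ μ :=
  ⟨hmeas.aestronglyMeasurable, HasFiniteIntegral.of_bounded (C := 1) (Filter.Eventually.of_forall
    (fun w => by rw [Real.norm_eq_abs, abs_le]; exact ⟨by linarith [(hrange w).1], (hrange w).2⟩))⟩

lemma sampleLaw_prob {μ1 : Measure ℝ} [IsProbabilityMeasure μ1] (N : ℕ) :
    IsProbabilityMeasure (sampleLawTI N μ1) := by
  unfold sampleLawTI; infer_instance

lemma integral_nonneg' {N : ℕ} {μ1 : Measure ℝ} {δ : (Fin N → ℝ) → ℝ}
    (hrange : ∀ w, δ w ∈ Icc (0:ℝ) 1) :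
    0 ≤ ∫ w, δ w ∂(sampleLawTI N μ1) :=
  integral_nonneg (fun w => (hrange w).1)

lemma integral_le_one' {N : ℕ} {μ1 : Measure ℝ} [IsProbabilityMeasure μ1]
    {δ : (Fin N → ℝ) → ℝ} (hmeas : Measurable δ) (hrange : ∀ w, δ w ∈ Icc (0:ℝ) 1) :
    ∫ w, δ w ∂(sampleLawTI N μ1) ≤ 1 := by
  haveI := sampleLaw_prob (μ1 := μ1) N
  calc ∫ w, δ w ∂(sampleLawTI N μ1) ≤ ∫ _, (1:ℝ) ∂(sampleLawTI N μ1) :=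
        integral_mono (integrable_of_range hmeas hrange) (integrable_const 1)
          (fun w => (hrange w).2)
    _ = 1 := by simp

lemma pi_singleton {N : ℕ} (μ1 : Measure ℝ) [SigmaFinite μ1] (s : Fin N → ℝ) :
    sampleLawTI N μ1 {s} = ∏ i, μ1 {s i} := by
  rw [sampleLawTI, ← Set.univ_pi_singleton s, Measure.pi_pi]

lemma integral_pos_of_point {N : ℕ} {μ1 : Measure ℝ} [IsProbabilityMeasure μ1]
    {δ : (Fin N → ℝ) → ℝ} (hmeas : Measurable δ) (hrange : ∀ w, δ w ∈ Icc (0:ℝ) 1)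
    (s : Fin N → ℝ) (hδs : 0 < δ s) (hμs : sampleLawTI N μ1 {s} ≠ 0) :
    0 < ∫ w, δ w ∂(sampleLawTI N μ1) := by
  haveI := sampleLaw_prob (μ1 := μ1) N
  set P := sampleLawTI N μ1 with hP
  have ht : 0 < (P {s}).toReal :=
    ENNReal.toReal_pos hμs (measure_ne_top _ _)
  have key : ∫ w, ({s} : Set (Fin N → ℝ)).indicator (fun _ => δ s) w ∂P ≤ ∫ w, δ w ∂P := by
    apply integral_mono ((integrable_const (δ s)).indicator (measurableSet_singleton s))
      (integrable_of_range hmeas hrange)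
    intro w
    by_cases hw : w ∈ ({s} : Set (Fin N → ℝ))
    · rw [Set.indicator_of_mem hw]
      rw [mem_singleton_iff] at hw
      subst hw; exact le_refl _
    · rw [Set.indicator_of_notMem hw]
      exact (hrange w).1
  rw [integral_indicator_const _ (measurableSet_singleton s), smul_eq_mul] at key
  exact lt_of_lt_of_le (mul_pos ht hδs) key

lemma regretSet_bddAbove {α r : ℝ}
    (h : (α ∈ Ioo (0:ℝ) 1 ∧ r ∈ Icc (0:ℝ) 1) ∨ (α = 0 ∧ r = 1))
    (N : ℕ) {q0 : ℝ} (hq01 : q0 ∈ Icc (0:ℝ) 1) (δ : (Fin N → ℝ) → ℝ) :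
    BddAbove (regretSetTI α r N q0 δ) := by
  obtain ⟨hr0, hr1⟩ := h_r h
  refine ⟨1, fun v hv => ?_⟩
  obtain ⟨μ0, μ1, hμ0, hμ1, hq0', rfl⟩ := hv
  unfold regretTI
  have h1 := (quant_mem_Icc hr0 hr1 α μ1).2
  have h2 := (quant_mem_Icc hr0 hr1 α
    (mix (∫ w, δ w ∂sampleLawTI N μ1) μ0 μ1)).1
  have h3 := max_le hq01.2 h1
  linarith

end Stmt8Aux
namespace Stmt8Aux

lemma tp_eq_left {β : ℝ} {x y : ℝ} {E : Set ℝ} (hx : x ∈ E) (hy : y ∉ E) :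
    tp β x y E = ENNReal.ofReal β := by
  rw [tp_apply, Set.indicator_of_mem hx, Set.indicator_of_notMem hy, Pi.one_apply]
  simp

lemma tp_eq_right {β : ℝ} {x y : ℝ} {E : Set ℝ} (hx : x ∉ E) (hy : y ∈ E) :
    tp β x y E = ENNReal.ofReal (1 - β) := by
  rw [tp_apply, Set.indicator_of_mem hy, Set.indicator_of_notMem hx, Pi.one_apply]
  simp

/-- Key lemma: if `μ1` has mass `> α` at `0` and the rule treats with positive probability
under `μ1`, then the regret value `q0` is attained. -/
lemma keyPos {α r : ℝ}
    (h : (α ∈ Ioo (0:ℝ) 1 ∧ r ∈ Icc (0:ℝ) 1) ∨ (α = 0 ∧ r = 1))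
    (N : ℕ) {q0 : ℝ} (hq01 : q0 ∈ Icc (0:ℝ) 1) (hq : 1/2 < q0)
    {δ : (Fin N → ℝ) → ℝ} (hmeas : Measurable δ) (hrange : ∀ w, δ w ∈ Icc (0:ℝ) 1)
    (μ1 : Measure ℝ) (hμ1 : IsProb01 μ1) (hA : α < (μ1 {0}).toReal)
    (hp : 0 < ∫ w, δ w ∂(sampleLawTI N μ1)) :
    q0 ∈ regretSetTI α r N q0 δ := by
  obtain ⟨hα0, hα1⟩ := h_alpha h
  haveI : IsProbabilityMeasure μ1 := hμ1.1
  set p := ∫ w, δ w ∂(sampleLawTI N μ1) with hpdef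
  have hp1 : p ≤ 1 := integral_le_one' hmeas hrange
  have hp0 : 0 ≤ p := hp.le
  set A := (μ1 {0}).toReal with hAdef
  have hpA : 0 < p * (A - α) := mul_pos hp (by linarith)
  set m := min α (p * (A - α)) / 2 with hmdef
  have hm0 : 0 ≤ m := div_nonneg (le_min hα0 hpA.le) (by norm_num)
  have hmα : m ≤ α / 2 := by
    have := min_le_left α (p * (A - α))
    rw [hmdef]; linarith
  have hmle : 2 * m ≤ p * (A - α) := by
    have := min_le_right α (p * (A - α))
    rw [hmdef]; linarith
  set β := α - m with hβdef
  have hβ0 : 0 ≤ β := by rw [hβdef]; linarith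
  have hβ1 : β ≤ 1 := by rw [hβdef]; linarith
  have hβcase : β < α ∨ β = 0 := by
    rcases lt_or_eq_of_le hα0 with hαpos | hαz
    · left
      have hm : 0 < m := div_pos (lt_min hαpos hpA) (by norm_num)
      rw [hβdef]; linarith
    · right
      have hpA' : (0:ℝ) ≤ p * (A - 0) := by
        have := hpA.le; rw [← hαz] at this; exact this
      rw [hβdef, hmdef, ← hαz, min_eq_left hpA']
      norm_num
  have hμ0 := tp_isProb01 hβ0 hβ1 (show (0:ℝ) ∈ Icc (0:ℝ) 1 by rw [mem_Icc]; constructor <;> norm_num) hq01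
  haveI : IsProbabilityMeasure (tp β 0 q0) := hμ0.1
  have hq0' := quant_tp_eq h hq01 hq hβ0 hβcase
  simp only [regretSetTI, mem_setOf_eq]
  refine ⟨tp β 0 q0, μ1, hμ0, hμ1, hq0', ?_⟩
  have hquantμ1 : quant α r μ1 = 0 := quant_eq_zero h μ1 hμ1.2 hA
  have htp0 : ((tp β 0 q0) {0}).toReal = β :=
    tp_toReal_left hβ0 (mem_singleton 0)
      (by rw [mem_singleton_iff]; intro hc; linarith)
  have hν : quant α r (mix p (tp β 0 q0) μ1) = 0 := by
    apply quant_eq_zero h _ (mix_icc hp0 hp1 hμ0.2 hμ1.2)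
    rw [mix_apply_toReal hp0 hp1 _ _ _ (measure_ne_top _ _) (measure_ne_top _ _), htp0,
      ← hAdef, hβdef]
    nlinarith [mul_nonneg hp0 hm0]
  unfold regretTI
  rw [← hpdef, hquantμ1, hν, max_eq_left (by linarith : (0:ℝ) ≤ q0), sub_zero]

/-- Case 1 of the minimax bound: if the treatment probability under `Ber a` is small,
regret at least `1 - q0` is attained. -/
lemma case1 {α r : ℝ}
    (h : (α ∈ Ioo (0:ℝ) 1 ∧ r ∈ Icc (0:ℝ) 1) ∨ (α = 0 ∧ r = 1))
    (N : ℕ) {q0 : ℝ} (hq01 : q0 ∈ Icc (0:ℝ) 1) (hq : 1/2 < q0)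
    {δ : (Fin N → ℝ) → ℝ} (hmeas : Measurable δ) (hrange : ∀ w, δ w ∈ Icc (0:ℝ) 1)
    {a : ℝ} (ha0 : 0 ≤ a) (haα : a < α ∨ a = 0)
    (hc : (∫ w, δ w ∂(sampleLawTI N (Ber a))) * (1 - a) < 1 - α) :
    ∃ v ∈ regretSetTI α r N q0 δ, 1 - q0 ≤ v := by
  obtain ⟨hα0, hα1⟩ := h_alpha h
  have ha1 : a ≤ 1 := by
    rcases haα with h' | h'
    · linarith
    · rw [h']; norm_num
  have hBer : IsProb01 (Ber a) := by
    rw [Ber_eq_tp]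
    exact tp_isProb01 ha0 ha1 (show (0:ℝ) ∈ Icc (0:ℝ) 1 by rw [mem_Icc]; constructor <;> norm_num) (show (1:ℝ) ∈ Icc (0:ℝ) 1 by rw [mem_Icc]; constructor <;> norm_num)
  haveI : IsProbabilityMeasure (Ber a) := hBer.1
  set p := ∫ w, δ w ∂(sampleLawTI N (Ber a)) with hpdef
  have hp0 : 0 ≤ p := integral_nonneg' hrange
  have hp1 : p ≤ 1 := integral_le_one' hmeas hrange
  have hμ0 := tp_isProb01 (le_refl (0:ℝ)) zero_le_one (show (0:ℝ) ∈ Icc (0:ℝ) 1 by rw [mem_Icc]; constructor <;> norm_num) hq01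
  haveI : IsProbabilityMeasure (tp 0 0 q0) := hμ0.1
  have hq0' := quant_tp_eq h hq01 hq (le_refl 0) (Or.inr rfl)
  have hB1 : ((Ber a) {1}).toReal = 1 - a := by
    rw [Ber_eq_tp]
    exact tp_toReal_right ha1 (by norm_num [Set.mem_singleton_iff]) (mem_singleton 1)
  have hμ11 : quant α r (Ber a) = 1 := by
    apply quant_eq_one h _ hBer.2
    rcases lt_or_eq_of_le hα0 with hαpos | hαz
    · left
      rw [hB1]
      rcases haα with h' | h' <;> linarith
    · right
      refine ⟨hαz.symm, ?_⟩
      rw [hB1]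
      rcases haα with h' | h'
      · exfalso; rw [← hαz] at h'; linarith
      · rw [h']; norm_num
  have hν : quant α r (mix p (tp 0 0 q0) (Ber a)) ≤ q0 := by
    apply quant_le_of h (by linarith)
    intro q hq0q hq1 hcon
    have e1 : ((Ber a) (Icc q 1)).toReal = 1 - a := by
      rw [Ber_eq_tp]
      exact tp_toReal_right ha1 (by rw [mem_Icc]; intro hcc; linarith [hcc.1])
        (by rw [mem_Icc]; exact ⟨hq1, le_refl 1⟩)
    have e2 : ((tp 0 0 q0) (Icc q 1)).toReal = 0 :=
      tp_toReal_none (by rw [mem_Icc]; intro hcc; linarith [hcc.1])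
        (by rw [mem_Icc]; intro hcc; linarith [hcc.1])
    rw [mix_apply_toReal hp0 hp1 _ _ _ (measure_ne_top _ _) (measure_ne_top _ _), e1, e2,
      mul_zero, add_zero] at hcon
    linarith
  refine ⟨_, ⟨tp 0 0 q0, Ber a, hμ0, hBer, hq0', rfl⟩, ?_⟩
  unfold regretTI
  rw [← hpdef, hμ11, max_eq_right hq01.2]
  linarith

/-- If the rule has positive treatment probability under a Bernoulli design, it must be
positive somewhere on `{0,1}^N`. -/
lemma exists_point {N : ℕ} {δ : (Fin N → ℝ) → ℝ} (hmeas : Measurable δ)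
    (hrange : ∀ w, δ w ∈ Icc (0:ℝ) 1) {μ1 : Measure ℝ} [IsProbabilityMeasure μ1]
    (hcube : μ1 ({0,1} : Set ℝ) = 1)
    (hp : 0 < ∫ w, δ w ∂(sampleLawTI N μ1)) :
    ∃ s : Fin N → ℝ, (∀ i, s i ∈ ({0,1} : Set ℝ)) ∧ 0 < δ s := by
  haveI := sampleLaw_prob (μ1 := μ1) N
  by_contra hno
  push_neg at hno
  have hmcube : MeasurableSet (Set.pi univ (fun _ : Fin N => ({0,1} : Set ℝ))) :=
    MeasurableSet.univ_pi (fun _ => (measurableSet_singleton (1:ℝ)).insert 0)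
  have hPcube : sampleLawTI N μ1 (Set.pi univ (fun _ : Fin N => ({0,1} : Set ℝ))) = 1 := by
    rw [sampleLawTI, Measure.pi_pi]
    simp [hcube]
  have hPcompl : sampleLawTI N μ1 (Set.pi univ (fun _ : Fin N => ({0,1} : Set ℝ)))ᶜ = 0 := by
    rw [measure_compl hmcube (measure_ne_top _ _), hPcube, measure_univ, tsub_self]
  have hae : ∀ᵐ w ∂(sampleLawTI N μ1), δ w = 0 := by
    rw [ae_iff]
    apply measure_mono_null _ hPcompl
    intro w hw
    simp only [mem_setOf_eq] at hw
    simp only [mem_compl_iff]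
    intro hwc
    exact hw (le_antisymm (hno w (fun i => hwc i (mem_univ i))) (hrange w).1)
  have hzero : ∫ w, δ w ∂(sampleLawTI N μ1) = 0 := by
    rw [integral_congr_ae (g := fun _ => (0:ℝ)) hae]
    exact integral_zero _ _
  linarith

end Stmt8Aux
namespace Stmt8Aux

/-- Part 1: the constant rule `0` has maximal regret exactly `1 - q0`, attained. -/
lemma part1 {α r : ℝ}
    (h : (α ∈ Ioo (0:ℝ) 1 ∧ r ∈ Icc (0:ℝ) 1) ∨ (α = 0 ∧ r = 1))
    (N : ℕ) {q0 : ℝ} (hq01 : q0 ∈ Icc (0:ℝ) 1) (hq : 1/2 < q0) :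
    IsGreatest (regretSetTI α r N q0 fun _ => 0) (1 - q0) := by
  obtain ⟨hr0, hr1⟩ := h_r h
  obtain ⟨hα0, hα1⟩ := h_alpha h
  constructor
  · -- membership
    have hμ0 := tp_isProb01 (le_refl (0:ℝ)) zero_le_one
      (show (0:ℝ) ∈ Icc (0:ℝ) 1 by rw [mem_Icc]; constructor <;> norm_num) hq01
    have hq0' := quant_tp_eq h hq01 hq (le_refl 0) (Or.inr rfl)
    have hBer : IsProb01 (Ber 0) := by
      rw [Ber_eq_tp]
      exact tp_isProb01 (le_refl 0) zero_le_one
        (show (0:ℝ) ∈ Icc (0:ℝ) 1 by rw [mem_Icc]; constructor <;> norm_num)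
        (show (1:ℝ) ∈ Icc (0:ℝ) 1 by rw [mem_Icc]; constructor <;> norm_num)
    have hB1val : ((Ber 0) {1}).toReal = 1 := by
      rw [Ber_eq_tp, tp_toReal_right zero_le_one
        (by norm_num [Set.mem_singleton_iff]) (mem_singleton 1)]
      norm_num
    have hB1 : quant α r (Ber 0) = 1 := by
      apply quant_eq_one h _ hBer.2
      rcases lt_or_eq_of_le hα0 with hαpos | hαz
      · left; rw [hB1val]; linarith
      · right; exact ⟨hαz.symm, by rw [hB1val]⟩
    refine ⟨tp 0 0 q0, Ber 0, hμ0, hBer, hq0', ?_⟩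
    unfold regretTI
    simp only [integral_zero, mix_zero]
    rw [hB1, hq0', max_eq_right hq01.2]
  · rintro v ⟨μ0, μ1, hμ0, hμ1, hq0', rfl⟩
    unfold regretTI
    simp only [integral_zero, mix_zero]
    rw [hq0']
    have h1 := (quant_mem_Icc hr0 hr1 α μ1).2
    have h2 := max_le hq01.2 h1
    linarith

end Stmt8Aux
/-- testing an innovation with `q0 > 1/2`: the constant rule `0` has maximal
regret `1 - q0` (attained); any rule that is somewhere positive on `[0,1]^N` has supremum of
regret at least `q0 > 1 - q0`; hence `δ⁰ ≡ 0` is the unique minimax regret rule. -/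
theorem stmt8 (α r : ℝ)
    (h : (α ∈ Ioo (0 : ℝ) 1 ∧ r ∈ Icc (0 : ℝ) 1) ∨ (α = 0 ∧ r = 1))
    (N : ℕ) (q0 : ℝ) (hq01 : q0 ∈ Icc (0 : ℝ) 1) (hq : 1 / 2 < q0) :
    IsGreatest (regretSetTI α r N q0 fun _ => 0) (1 - q0) ∧
    (∀ δ : (Fin N → ℝ) → ℝ, Measurable δ → (∀ w, δ w ∈ Icc (0 : ℝ) 1) →
      (∃ wt : Fin N → ℝ, (∀ i, wt i ∈ Icc (0 : ℝ) 1) ∧ 0 < δ wt) →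
      q0 ≤ sSup (regretSetTI α r N q0 δ)) ∧
    1 - q0 < q0 ∧
    (∀ δ : (Fin N → ℝ) → ℝ, Measurable δ → (∀ w, δ w ∈ Icc (0 : ℝ) 1) →
      sSup (regretSetTI α r N q0 fun _ => 0) ≤ sSup (regretSetTI α r N q0 δ)) ∧
    (∀ δ : (Fin N → ℝ) → ℝ, Measurable δ → (∀ w, δ w ∈ Icc (0 : ℝ) 1) →
      (∃ wt : Fin N → ℝ, (∀ i, wt i ∈ Icc (0 : ℝ) 1) ∧ 0 < δ wt) →
      sSup (regretSetTI α r N q0 fun _ => 0) < sSup (regretSetTI α r N q0 δ)) := by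
  obtain ⟨hα0, hα1⟩ := Stmt8Aux.h_alpha h
  have hpart1 := Stmt8Aux.part1 h N hq01 hq
  have hsup0 : sSup (regretSetTI α r N q0 fun _ => 0) = 1 - q0 := hpart1.csSup_eq
  have hpart3 : 1 - q0 < q0 := by linarith
  have hpart2 : ∀ δ : (Fin N → ℝ) → ℝ, Measurable δ → (∀ w, δ w ∈ Icc (0 : ℝ) 1) →
      (∃ wt : Fin N → ℝ, (∀ i, wt i ∈ Icc (0 : ℝ) 1) ∧ 0 < δ wt) →
      q0 ≤ sSup (regretSetTI α r N q0 δ) := by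
    rintro δ hmeas hrange ⟨wt, hwt, hδwt⟩
    set s : ℝ := (1 - α) / (2 * N + 2) with hsdef
    have hspos : 0 < s := div_pos (by linarith) (by positivity)
    have hNs : (N : ℝ) * s ≤ (1 - α) / 2 := by
      rw [hsdef, mul_div_assoc']
      rw [div_le_div_iff₀ (by positivity) (by norm_num)]
      nlinarith [Nat.cast_nonneg (α := ℝ) N]
    have h1Ns : 0 ≤ 1 - (N : ℝ) * s := by linarith
    set μ1 : Measure ℝ := ENNReal.ofReal (1 - N * s) • Measure.dirac 0 +
      ENNReal.ofReal s • (∑ i : Fin N, Measure.dirac (wt i)) with hμ1def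
    have hμ1apply : ∀ E : Set ℝ, μ1 E = ENNReal.ofReal (1 - N * s) * E.indicator 1 0 +
        ENNReal.ofReal s * ∑ i : Fin N, E.indicator 1 (wt i) := by
      intro E
      rw [hμ1def]
      simp [Measure.add_apply, Measure.smul_apply, smul_eq_mul, Measure.coe_finset_sum,
        Finset.sum_apply, Measure.dirac_apply]
    have hkey : ∀ E : Set ℝ, (0 : ℝ) ∈ E → (∀ i, wt i ∈ E) → μ1 E = 1 := by
      intro E h0E hwtE
      rw [hμ1apply E, Set.indicator_of_mem h0E, Pi.one_apply, mul_one]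
      have hsum : ∑ i : Fin N, E.indicator (1 : ℝ → ENNReal) (wt i) = (N : ENNReal) := by
        rw [Finset.sum_congr rfl (fun i _ => by
          rw [Set.indicator_of_mem (hwtE i), Pi.one_apply])]
        simp
      rw [hsum, ← ENNReal.ofReal_natCast N, ← ENNReal.ofReal_mul hspos.le,
        ← ENNReal.ofReal_add h1Ns (by positivity)]
      rw [show 1 - (N : ℝ) * s + s * N = 1 by ring, ENNReal.ofReal_one]
    have hμ1prob : IsProbabilityMeasure μ1 := ⟨hkey univ (mem_univ _) (fun i => mem_univ _)⟩
    haveI := hμ1prob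
    have hμ1icc : μ1 (Icc 0 1) = 1 := hkey (Icc 0 1)
      (by rw [mem_Icc]; constructor <;> norm_num) hwt
    have hμ1IsProb01 : IsProb01 μ1 := ⟨hμ1prob, hμ1icc⟩
    have hA : α < (μ1 {0}).toReal := by
      have hle : ENNReal.ofReal (1 - N * s) ≤ μ1 {0} := by
        rw [hμ1apply, Set.indicator_of_mem (mem_singleton (0:ℝ)), Pi.one_apply, mul_one]
        exact le_self_add
      have := ENNReal.toReal_mono (measure_ne_top _ _) hle
      rw [ENNReal.toReal_ofReal h1Ns] at this
      linarith
    have hwtatom : ∀ i, μ1 {wt i} ≠ 0 := by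
      intro i
      have hone : (1 : ENNReal) ≤ ∑ j : Fin N, ({wt i} : Set ℝ).indicator 1 (wt j) := by
        have := Finset.single_le_sum
          (f := fun j => ({wt i} : Set ℝ).indicator (1 : ℝ → ENNReal) (wt j))
          (fun j _ => zero_le) (Finset.mem_univ i)
        simpa using this
      have hle : ENNReal.ofReal s ≤ μ1 {wt i} := by
        rw [hμ1apply]
        calc ENNReal.ofReal s = ENNReal.ofReal s * 1 := (mul_one _).symm
          _ ≤ ENNReal.ofReal s * ∑ j : Fin N, ({wt i} : Set ℝ).indicator 1 (wt j) :=
              mul_le_mul_right hone _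
          _ ≤ _ := le_add_self
      exact (lt_of_lt_of_le (ENNReal.ofReal_pos.2 hspos) hle).ne'
    have hPs : sampleLawTI N μ1 {wt} ≠ 0 := by
      rw [Stmt8Aux.pi_singleton]
      exact Finset.prod_ne_zero_iff.2 (fun i _ => hwtatom i)
    have hp := Stmt8Aux.integral_pos_of_point hmeas hrange wt hδwt hPs
    have hmem := Stmt8Aux.keyPos h N hq01 hq hmeas hrange μ1 hμ1IsProb01 hA hp
    exact le_csSup (Stmt8Aux.regretSet_bddAbove h N hq01 δ) hmem
  have hpart4 : ∀ δ : (Fin N → ℝ) → ℝ, Measurable δ → (∀ w, δ w ∈ Icc (0 : ℝ) 1) →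
      sSup (regretSetTI α r N q0 fun _ => 0) ≤ sSup (regretSetTI α r N q0 δ) := by
    intro δ hmeas hrange
    rw [hsup0]
    set a := α / 2 with hadef
    have ha0 : 0 ≤ a := by rw [hadef]; linarith
    have haα : a < α ∨ a = 0 := by
      rcases lt_or_eq_of_le hα0 with hp | hz
      · left; rw [hadef]; linarith
      · right; rw [hadef, ← hz]; norm_num
    have ha1 : a < 1 := by rw [hadef]; linarith
    by_cases hc : (∫ w, δ w ∂(sampleLawTI N (Ber a))) * (1 - a) < 1 - α
    · obtain ⟨v, hv, hvge⟩ := Stmt8Aux.case1 h N hq01 hq hmeas hrange ha0 haα hc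
      exact le_trans hvge (le_csSup (Stmt8Aux.regretSet_bddAbove h N hq01 δ) hv)
    · push_neg at hc
      have hBer : IsProb01 (Ber a) := by
        rw [Stmt8Aux.Ber_eq_tp]
        exact Stmt8Aux.tp_isProb01 ha0 ha1.le
          (show (0:ℝ) ∈ Icc (0:ℝ) 1 by rw [mem_Icc]; constructor <;> norm_num)
          (show (1:ℝ) ∈ Icc (0:ℝ) 1 by rw [mem_Icc]; constructor <;> norm_num)
      haveI := hBer.1
      have hppos : 0 < ∫ w, δ w ∂(sampleLawTI N (Ber a)) := by
        have h0 := Stmt8Aux.integral_nonneg' (μ1 := Ber a) (N := N) hrange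
        rcases lt_or_eq_of_le h0 with h' | h'
        · exact h'
        · exfalso; rw [← h', zero_mul] at hc; linarith
      have hcube : (Ber a) ({0, 1} : Set ℝ) = 1 := by
        rw [Stmt8Aux.Ber_eq_tp]
        exact Stmt8Aux.tp_eq_one ha0 ha1.le (mem_insert 0 {1})
          (mem_insert_of_mem 0 (mem_singleton 1))
      obtain ⟨spt, hspt, hδspt⟩ := Stmt8Aux.exists_point hmeas hrange hcube hppos
      set a' := (1 + α) / 2 with ha'def
      have ha'0 : 0 < a' := by rw [ha'def]; linarith
      have ha'1 : a' < 1 := by rw [ha'def]; linarith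
      have hBer' : IsProb01 (Ber a') := by
        rw [Stmt8Aux.Ber_eq_tp]
        exact Stmt8Aux.tp_isProb01 ha'0.le ha'1.le
          (show (0:ℝ) ∈ Icc (0:ℝ) 1 by rw [mem_Icc]; constructor <;> norm_num)
          (show (1:ℝ) ∈ Icc (0:ℝ) 1 by rw [mem_Icc]; constructor <;> norm_num)
      haveI := hBer'.1
      have hA : α < ((Ber a') {0}).toReal := by
        rw [Stmt8Aux.Ber_eq_tp, Stmt8Aux.tp_toReal_left ha'0.le (mem_singleton 0)
          (by norm_num [Set.mem_singleton_iff])]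
        rw [ha'def]; linarith
      have hatom : ∀ i, (Ber a') {spt i} ≠ 0 := by
        intro i
        have hi := hspt i
        rw [mem_insert_iff, mem_singleton_iff] at hi
        rcases hi with h' | h'
        · rw [h', Stmt8Aux.Ber_eq_tp, Stmt8Aux.tp_eq_left (mem_singleton 0)
            (by norm_num [Set.mem_singleton_iff])]
          simp only [ne_eq, ENNReal.ofReal_eq_zero, not_le]
          exact ha'0
        · rw [h', Stmt8Aux.Ber_eq_tp, Stmt8Aux.tp_eq_right
            (by norm_num [Set.mem_singleton_iff]) (mem_singleton 1)]
          simp only [ne_eq, ENNReal.ofReal_eq_zero, not_le]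
          linarith
      have hPs' : sampleLawTI N (Ber a') {spt} ≠ 0 := by
        rw [Stmt8Aux.pi_singleton]
        exact Finset.prod_ne_zero_iff.2 (fun i _ => hatom i)
      have hp' := Stmt8Aux.integral_pos_of_point hmeas hrange spt hδspt hPs'
      have hmem := Stmt8Aux.keyPos h N hq01 hq hmeas hrange (Ber a') hBer' hA hp'
      have := le_csSup (Stmt8Aux.regretSet_bddAbove h N hq01 δ) hmem
      linarith
  refine ⟨hpart1, hpart2, hpart3, hpart4, ?_⟩
  intro δ hmeas hrange hpos
  rw [hsup0]
  exact lt_of_lt_of_le hpart3 (hpart2 δ hmeas hrange hpos)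
end
end
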